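/- arXiv:1401.2940 — 9 statements merged into one kernel-verified Lean document; each statement's English description precedes it below -/
import Mathlib

section
/- Let r ≥ 5 and 1 ≤ s ≤ r−1 be integers, and let G be a vertex-transitive group of automorphisms of S(PX(2,r,s)). Then G contains an element g such that the cyclic group generated by g is semiregular on the vertices of S(PX(2,r,s)) and the order of g is at least r (indeed equal to r or 2r). -/
/-!
The vertical edges `(n, x, +) — (n, x, −)` are exactly the edges on no 4-cycle, so automorphisms
permute the fibres `{x}`; as the graph is connected, a sign-preserving automorphism shifts all
fibres by the same amount. Pick `g ∈ G` with `g (0, 0, +) = (0, 1, +)`; then `g = w ∘ ρ` with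
`ρ` the rotation `x ↦ x + 1` and `w` fixing every fibre and sign. The horizontal edges
`(n, x, +) — (m, x + 1, −)` identify `n (i + 1)` with `m i`; propagating along them shows that
`w` adds to each coordinate `n i` a bit `b (x + i)` depending only on the position `x + i`.
Hence `g ^ r` adds the constant `∑ y, b y` to every coordinate: it is an involution which is
either trivial or moves every vertex. A power of `g` with a fixed point is a power of `g ^ r`,
hence trivial, and `orderOf g ∈ {r, 2 r}`.
-/

namespace Stmt5

/-- Vertex set of `S(PX(2,r,s))`: `ℤ₂ˢ × ℤᵣ × {+,−}`, with `true = +` and `false = −`. -/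
abbrev SPXV (r s : ℕ) : Type := (Fin s → ZMod 2) × ZMod r × Bool

def spxRel (r s : ℕ) (a b : SPXV r s) : Prop :=
  a.2.2 = true ∧ b.2.2 = false ∧
    ((b.2.1 = a.2.1 + 1 ∧ ∀ (i : ℕ) (h : i + 1 < s),
        b.1 ⟨i, by omega⟩ = a.1 ⟨i + 1, h⟩) ∨
     (b.2.1 = a.2.1 ∧ b.1 = a.1))

def SPX (r s : ℕ) : SimpleGraph (SPXV r s) := SimpleGraph.fromRel (spxRel r s)

open Finset

section Graphs

variable {V : Type*} (G : SimpleGraph V)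

def IsAut (g : Equiv.Perm V) : Prop := ∀ u v, G.Adj (g u) (g v) ↔ G.Adj u v

def OnFourCycle (a b : V) : Prop :=
  ∃ c d, c ≠ a ∧ d ≠ b ∧ G.Adj b c ∧ G.Adj c d ∧ G.Adj d a

variable {G}

lemma IsAut.mul {g h : Equiv.Perm V} (hg : IsAut G g) (hh : IsAut G h) : IsAut G (g * h) :=
  fun u v => (hg (h u) (h v)).trans (hh u v)

lemma IsAut.inv {g : Equiv.Perm V} (hg : IsAut G g) : IsAut G g⁻¹ := fun u v => by
  simpa using (hg (g⁻¹ u) (g⁻¹ v)).symm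

lemma OnFourCycle.symm {a b : V} : OnFourCycle G a b → OnFourCycle G b a := by
  rintro ⟨c, d, hca, hdb, hbc, hcd, hda⟩
  exact ⟨d, c, hdb, hca, hda.symm, hcd.symm, hbc.symm⟩

lemma IsAut.onFourCycle {g : Equiv.Perm V} (hg : IsAut G g) {a b : V} :
    OnFourCycle G a b → OnFourCycle G (g a) (g b) := by
  rintro ⟨c, d, hca, hdb, hbc, hcd, hda⟩
  exact ⟨g c, g d, g.injective.ne hca, g.injective.ne hdb,
    (hg _ _).2 hbc, (hg _ _).2 hcd, (hg _ _).2 hda⟩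

lemma IsAut.onFourCycle_iff {g : Equiv.Perm V} (hg : IsAut G g) {a b : V} :
    OnFourCycle G (g a) (g b) ↔ OnFourCycle G a b :=
  ⟨fun h => by simpa using hg.inv.onFourCycle h, hg.onFourCycle⟩

lemma _root_.SimpleGraph.Preconnected.eq_of_forall_adj {α : Type*} (hG : G.Preconnected)
    {f : V → α} (hf : ∀ a b, G.Adj a b → f a = f b) (u v : V) : f u = f v := by
  obtain ⟨p⟩ := hG u v
  induction p with
  | nil => rfl
  | cons h _ ih => exact (hf _ _ h).trans ih

end Graphs

variable {r s : ℕ}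

lemma natCast_ne_zero_of_lt {k : ℕ} (hk : 0 < k) (hkr : k < r) : (k : ZMod r) ≠ 0 := by
  rw [Ne, ZMod.natCast_eq_zero_iff]
  exact Nat.not_dvd_of_pos_of_lt hk hkr

def IsShift (n m : Fin s → ZMod 2) : Prop :=
  ∀ (i : ℕ) (h : i + 1 < s), m ⟨i, by omega⟩ = n ⟨i + 1, h⟩

lemma adj_iff {a b : SPXV r s} : (SPX r s).Adj a b ↔ spxRel r s a b ∨ spxRel r s b a := by
  rw [SPX, SimpleGraph.fromRel_adj, and_iff_right_iff_imp]
  rintro (⟨ha, hb, -⟩ | ⟨ha, hb, -⟩) rfl <;> simp_all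

lemma adj_mk_true_iff {n : Fin s → ZMod 2} {x : ZMod r} {w : SPXV r s} :
    (SPX r s).Adj (n, x, true) w ↔
      w = (n, x, false) ∨ ∃ m, IsShift n m ∧ w = (m, x + 1, false) := by
  obtain ⟨m, y, ε⟩ := w
  rw [adj_iff, or_iff_left (by simp [spxRel])]
  constructor
  · rintro ⟨-, rfl, ⟨rfl, hm⟩ | ⟨rfl, rfl⟩⟩
    exacts [Or.inr ⟨m, hm, rfl⟩, Or.inl rfl]
  · rintro (h | ⟨m', hm', h⟩) <;> simp only [Prod.mk.injEq] at h <;> obtain ⟨rfl, rfl, rfl⟩ := h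
    exacts [⟨rfl, rfl, Or.inr ⟨rfl, rfl⟩⟩, ⟨rfl, rfl, Or.inl ⟨rfl, hm'⟩⟩]

lemma adj_sign {a b : SPXV r s} (h : (SPX r s).Adj a b) : b.2.2 = !a.2.2 := by
  rcases adj_iff.1 h with ⟨ha, hb, -⟩ | ⟨ha, hb, -⟩ <;> simp [ha, hb]

lemma of_adj_of_symm {P : SPXV r s → SPXV r s → Prop} (hsymm : ∀ a b, P a b → P b a)
    (htrue : ∀ a b, (SPX r s).Adj a b → a.2.2 = true → P a b) {a b : SPXV r s}
    (h : (SPX r s).Adj a b) : P a b := by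
  cases ha : a.2.2
  · exact hsymm _ _ (htrue _ _ h.symm (by simp [adj_sign h, ha]))
  · exact htrue _ _ h ha

def vflip (v : SPXV r s) : SPXV r s := (v.1, v.2.1, !v.2.2)

lemma adj_vflip (v : SPXV r s) : (SPX r s).Adj v (vflip v) := by
  obtain ⟨n, x, _ | _⟩ := v
  · exact (adj_mk_true_iff.2 (Or.inl rfl)).symm
  · exact adj_mk_true_iff.2 (Or.inl rfl)

lemma adj_of_isShift {n m : Fin s → ZMod 2} (h : IsShift n m) (x : ZMod r) :
    (SPX r s).Adj (n, x, true) (m, x + 1, false) :=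
  adj_mk_true_iff.2 (Or.inr ⟨m, h, rfl⟩)

def window (f : ℕ → ZMod 2) (j : ℕ) : Fin s → ZMod 2 := fun i => f (i + j)

lemma isShift_window (f : ℕ → ZMod 2) (j : ℕ) :
    IsShift (window (s := s) f j) (window f (j + 1)) :=
  fun i _ => show f (i + (j + 1)) = f (i + 1 + j) from congrArg f (by omega)

lemma reachable_window (f : ℕ → ZMod 2) (x : ZMod r) (j : ℕ) :
    (SPX r s).Reachable (window f 0, x, true) (window f j, x + j, true) := by
  induction j with
  | zero => simp
  | succ j ih =>
    have step := (adj_of_isShift (isShift_window (s := s) f j) (x + (j : ZMod r))).reachable.trans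
      (adj_vflip (window f (j + 1), x + (j : ZMod r) + 1, false)).reachable
    rw [Nat.cast_succ, ← add_assoc]
    exact ih.trans step

lemma reachable_of_le {k : ℕ} (hk : s ≤ k) (n m : Fin s → ZMod 2) (x : ZMod r) :
    (SPX r s).Reachable (n, x, true) (m, x + k, true) := by
  let f : ℕ → ZMod 2 := fun t =>
    if h : t < s then n ⟨t, h⟩ else if h' : t - k < s then m ⟨t - k, h'⟩ else 0
  have hn : window f 0 = n := funext fun i => by simp [window, f]
  have hm : window f k = m := funext fun i => by
    simp [window, f, show ¬ (i : ℕ) + k < s by omega]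
  simpa [hn, hm] using reachable_window (s := s) f x k

lemma preconnected [NeZero r] : (SPX r s).Preconnected := by
  have hplus (n m : Fin s → ZMod 2) (x y : ZMod r) :
      (SPX r s).Reachable (n, x, true) (m, y, true) := by
    have hxy : x + ((s + (y - x - s).val : ℕ) : ZMod r) = y := by
      push_cast [ZMod.natCast_zmod_val]
      ring
    simpa [hxy] using reachable_of_le (Nat.le_add_right s (y - x - s).val) n m x
  have hsign (v : SPXV r s) : (SPX r s).Reachable v (v.1, v.2.1, true) := by
    obtain ⟨n, x, _ | _⟩ := v
    exacts [(adj_vflip _).reachable, .rfl]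
  exact fun u v => (hsign u).trans ((hplus _ _ _ _).trans (hsign v).symm)

lemma not_onFourCycle_vertical (hr : 3 ≤ r) (n : Fin s → ZMod 2) (x : ZMod r) :
    ¬ OnFourCycle (SPX r s) (n, x, true) (n, x, false) := by
  have h1 : (1 : ZMod r) ≠ 0 := by exact_mod_cast natCast_ne_zero_of_lt one_pos (by omega)
  have h2 : (2 : ZMod r) ≠ 0 := by exact_mod_cast natCast_ne_zero_of_lt two_pos (by omega)
  rintro ⟨⟨c, y, _ | _⟩, d, hca, hdb, hbc, hcd, hda⟩
  · exact absurd (adj_sign hbc) (by simp)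
  have hxy : x = y + 1 := by
    rcases adj_mk_true_iff.1 hbc.symm with h | ⟨m, -, h⟩ <;> simp only [Prod.mk.injEq] at h
    · exact absurd (by rw [h.1, h.2.1]) hca
    · exact h.2.1
  obtain ⟨m, -, rfl⟩ := (adj_mk_true_iff.1 hda.symm).resolve_left hdb
  rcases adj_mk_true_iff.1 hcd with h | ⟨m', -, h⟩ <;> simp only [Prod.mk.injEq] at h
  · exact h2 (by linear_combination h.2.1 - hxy)
  · exact h1 (by linear_combination h.2.1 - hxy)

lemma onFourCycle_of_isShift (hs : 1 ≤ s) {n m : Fin s → ZMod 2} (h : IsShift n m)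
    (x : ZMod r) : OnFourCycle (SPX r s) (n, x, true) (m, x + 1, false) := by
  -- flip a coordinate of `n` that `m` does not see, and one of `m` that `n` does not see
  let i₀ : Fin s := ⟨0, hs⟩
  let i₁ : Fin s := ⟨s - 1, by omega⟩
  refine ⟨(Function.update n i₀ (n i₀ + 1), x, true), (Function.update m i₁ (m i₁ + 1), x + 1, false),
    by simp, by simp, (adj_of_isShift ?_ x).symm, adj_of_isShift ?_ x, (adj_of_isShift ?_ x).symm⟩
  all_goals
    intro i hi
    simp [Fin.ext_iff, i₀, i₁, h i hi, show i ≠ s - 1 by omega]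

lemma fiber_eq_iff_not_onFourCycle (hr : 3 ≤ r) (hs : 1 ≤ s) {a b : SPXV r s}
    (h : (SPX r s).Adj a b) : a.2.1 = b.2.1 ↔ ¬ OnFourCycle (SPX r s) a b := by
  have h1 : (1 : ZMod r) ≠ 0 := by exact_mod_cast natCast_ne_zero_of_lt one_pos (by omega)
  refine of_adj_of_symm (P := fun a b => a.2.1 = b.2.1 ↔ ¬ OnFourCycle (SPX r s) a b)
    (fun a b hab => by rw [eq_comm, hab]; exact not_congr ⟨.symm, .symm⟩) ?_ h
  rintro ⟨n, x, _⟩ w hw rfl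
  rcases adj_mk_true_iff.1 hw with rfl | ⟨m, hm, rfl⟩
  · simpa using not_onFourCycle_vertical hr n x
  · simpa [h1] using onFourCycle_of_isShift hs hm x

lemma IsAut.fiber_eq_iff (hr : 3 ≤ r) (hs : 1 ≤ s) {g : Equiv.Perm (SPXV r s)}
    (hg : IsAut (SPX r s) g) {a b : SPXV r s} (h : (SPX r s).Adj a b) :
    (g a).2.1 = (g b).2.1 ↔ a.2.1 = b.2.1 := by
  rw [fiber_eq_iff_not_onFourCycle hr hs h, fiber_eq_iff_not_onFourCycle hr hs ((hg a b).2 h),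
    hg.onFourCycle_iff]

lemma fiber_eq_add_one {a b : SPXV r s} (h : (SPX r s).Adj a b) (ha : a.2.2 = true)
    (hab : a.2.1 ≠ b.2.1) : b.2.1 = a.2.1 + 1 := by
  obtain ⟨n, x, ε⟩ := a
  obtain rfl : ε = true := ha
  rcases adj_mk_true_iff.1 h with rfl | ⟨m, -, rfl⟩
  exacts [absurd rfl hab, rfl]

lemma eq_vflip_of_adj (hr : 3 ≤ r) {v w : SPXV r s} (h : (SPX r s).Adj v w)
    (hvw : v.2.1 = w.2.1) : w = vflip v := by
  have h1 : (1 : ZMod r) ≠ 0 := by exact_mod_cast natCast_ne_zero_of_lt one_pos (by omega)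
  refine of_adj_of_symm (P := fun v w => v.2.1 = w.2.1 → w = vflip v)
    (fun a b hab hba => ?_) ?_ h hvw
  · rw [hab hba.symm]
    simp [vflip]
  rintro ⟨n, x, _⟩ w hw rfl
  rcases adj_mk_true_iff.1 hw with rfl | ⟨m, hm, rfl⟩
  · exact fun _ => rfl
  · simp [h1]

lemma IsAut.map_vflip (hr : 3 ≤ r) (hs : 1 ≤ s) {g : Equiv.Perm (SPXV r s)}
    (hg : IsAut (SPX r s) g) (v : SPXV r s) : g (vflip v) = vflip (g v) :=
  eq_vflip_of_adj hr ((hg _ _).2 (adj_vflip v)) ((hg.fiber_eq_iff hr hs (adj_vflip v)).2 rfl)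

lemma IsAut.sign_eq [NeZero r] {g : Equiv.Perm (SPXV r s)} (hg : IsAut (SPX r s) g)
    {v₀ : SPXV r s} (h₀ : (g v₀).2.2 = v₀.2.2) (v : SPXV r s) : (g v).2.2 = v.2.2 := by
  have hxor := preconnected.eq_of_forall_adj (f := fun v => xor (g v).2.2 v.2.2)
    (fun a b h => by
      simp only [adj_sign h, adj_sign ((hg a b).2 h)]
      cases (g a).2.2 <;> cases a.2.2 <;> rfl) v v₀
  simpa [h₀] using hxor

lemma IsAut.fiber_sub_eq (hr : 3 ≤ r) (hs : 1 ≤ s) {g : Equiv.Perm (SPXV r s)}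
    (hg : IsAut (SPX r s) g) (hsign : ∀ v, (g v).2.2 = v.2.2) (u v : SPXV r s) :
    (g u).2.1 - u.2.1 = (g v).2.1 - v.2.1 := by
  have : NeZero r := ⟨by omega⟩
  refine preconnected.eq_of_forall_adj (fun a b h => of_adj_of_symm
    (P := fun a b => (g a).2.1 - a.2.1 = (g b).2.1 - b.2.1) (fun _ _ => Eq.symm)
    (fun a b h ha => ?_) h) u v
  by_cases hab : a.2.1 = b.2.1
  · linear_combination (hg.fiber_eq_iff hr hs h).2 hab - hab
  · have hgab : (g a).2.1 ≠ (g b).2.1 := mt (hg.fiber_eq_iff hr hs h).1 hab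
    linear_combination fiber_eq_add_one h ha hab -
      fiber_eq_add_one ((hg a b).2 h) ((hsign a).trans ha) hgab

def rot : Equiv.Perm (SPXV r s) :=
  Equiv.prodCongr (Equiv.refl _) (Equiv.prodCongr (Equiv.addRight 1) (Equiv.refl _))

lemma rot_apply (v : SPXV r s) : rot v = (v.1, v.2.1 + 1, v.2.2) := rfl

lemma rot_inv_apply (v : SPXV r s) : rot⁻¹ v = (v.1, v.2.1 - 1, v.2.2) :=
  Equiv.Perm.inv_eq_iff_eq.2 (by simp [rot_apply])

lemma rot_pow_apply (k : ℕ) (v : SPXV r s) : (rot ^ k) v = (v.1, v.2.1 + k, v.2.2) := by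
  induction k with
  | zero => simp
  | succ k ih => rw [pow_succ', Equiv.Perm.mul_apply, ih, rot_apply, Nat.cast_succ, add_assoc]

lemma rot_pow_card : (rot : Equiv.Perm (SPXV r s)) ^ r = 1 :=
  Equiv.ext fun v => by simp [rot_pow_apply]

lemma isAut_rot : IsAut (SPX r s) rot := fun u v => by
  simp only [adj_iff, spxRel, rot_apply, add_left_inj]

def bitFlip (b : ZMod r → ZMod 2) : Equiv.Perm (SPXV r s) :=
  Function.Involutive.toPerm (fun v => (fun i => v.1 i + b (v.2.1 + i.val), v.2.1, v.2.2))
    fun v => by simp [CharTwo.add_cancel_right]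

lemma bitFlip_apply (b : ZMod r → ZMod 2) (v : SPXV r s) :
    bitFlip b v = (fun i => v.1 i + b (v.2.1 + i.val), v.2.1, v.2.2) := rfl

lemma bitFlip_mul (a b : ZMod r → ZMod 2) :
    (bitFlip a * bitFlip b : Equiv.Perm (SPXV r s)) = bitFlip (a + b) :=
  Equiv.ext fun v => by simp [bitFlip_apply, add_assoc, add_comm (a _)]

lemma bitFlip_zero : (bitFlip 0 : Equiv.Perm (SPXV r s)) = 1 :=
  Equiv.ext fun v => by simp [bitFlip_apply]

lemma bitFlip_pow (b : ZMod r → ZMod 2) (k : ℕ) :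
    (bitFlip b ^ k : Equiv.Perm (SPXV r s)) = bitFlip (k • b) := by
  induction k with
  | zero => simp [bitFlip_zero]
  | succ k ih => rw [pow_succ, ih, bitFlip_mul, succ_nsmul]

lemma bitFlip_sq (b : ZMod r → ZMod 2) : (bitFlip b ^ 2 : Equiv.Perm (SPXV r s)) = 1 := by
  rw [bitFlip_pow, two_nsmul, CharTwo.add_self_eq_zero, bitFlip_zero]

lemma rot_mul_bitFlip (b : ZMod r → ZMod 2) :
    (rot * bitFlip b : Equiv.Perm (SPXV r s)) = bitFlip (fun y => b (y - 1)) * rot :=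
  Equiv.ext fun v => by simp [bitFlip_apply, rot_apply, add_right_comm]

lemma bitFlip_mul_rot_pow (a : ZMod r → ZMod 2) (k : ℕ) :
    (bitFlip a * rot) ^ k =
      (bitFlip (fun y => ∑ t ∈ range k, a (y - (t : ZMod r))) * rot ^ k : Equiv.Perm (SPXV r s)) := by
  induction k with
  | zero => simp [← Pi.zero_def, bitFlip_zero]
  | succ k ih =>
    rw [pow_succ', ih, mul_assoc, ← mul_assoc rot, rot_mul_bitFlip, mul_assoc, ← pow_succ',
      ← mul_assoc, bitFlip_mul]
    congr 3
    funext y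
    rw [sum_range_succ', Pi.add_apply]
    simp only [Nat.cast_add, Nat.cast_one, sub_add_eq_sub_sub_swap, Nat.cast_zero, sub_zero]
    ring

lemma sum_range_natCast [NeZero r] {M : Type*} [AddCommMonoid M] (f : ZMod r → M) :
    ∑ t ∈ range r, f t = ∑ z, f z :=
  sum_nbij' (fun t => (t : ZMod r)) ZMod.val (by simp) (by simp [ZMod.val_lt])
    (fun t ht => ZMod.val_cast_of_lt (mem_range.1 ht)) (fun z _ => ZMod.natCast_zmod_val z)
    (fun _ _ => rfl)

lemma bitFlip_mul_rot_pow_card [NeZero r] (a : ZMod r → ZMod 2) :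
    (bitFlip a * rot) ^ r = (bitFlip (fun _ => ∑ z, a z) : Equiv.Perm (SPXV r s)) := by
  rw [bitFlip_mul_rot_pow, rot_pow_card, mul_one]
  congr 1
  funext y
  rw [sum_range_natCast (fun t => a (y - t))]
  exact Equiv.sum_comp (Equiv.subLeft y) a

section FiberAction

variable {h : Equiv.Perm (SPXV r s)}

def fiberMap (h : Equiv.Perm (SPXV r s)) (x : ZMod r) (n : Fin s → ZMod 2) : Fin s → ZMod 2 :=
  (h (n, x, true)).1

lemma apply_mk_eq_fiberMap (hr : 3 ≤ r) (hs : 1 ≤ s) (hh : IsAut (SPX r s) h)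
    (hfix : ∀ v, (h v).2 = v.2) (n : Fin s → ZMod 2) (x : ZMod r) (ε : Bool) :
    h (n, x, ε) = (fiberMap h x n, x, ε) := by
  have htrue : h (n, x, true) = (fiberMap h x n, x, true) := Prod.ext rfl (hfix _)
  cases ε
  · simpa [htrue, vflip] using hh.map_vflip hr hs (n, x, true)
  · exact htrue

lemma fiberMap_isShift (hr : 3 ≤ r) (hs : 1 ≤ s) (hh : IsAut (SPX r s) h)
    (hfix : ∀ v, (h v).2 = v.2) {n m : Fin s → ZMod 2} (hnm : IsShift n m) (x : ZMod r) :
    IsShift (fiberMap h x n) (fiberMap h (x + 1) m) := by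
  have h1 : (1 : ZMod r) ≠ 0 := by exact_mod_cast natCast_ne_zero_of_lt one_pos (by omega)
  have hadj := (hh _ _).2 (adj_of_isShift hnm x)
  rw [apply_mk_eq_fiberMap hr hs hh hfix, apply_mk_eq_fiberMap hr hs hh hfix] at hadj
  rcases adj_mk_true_iff.1 hadj with heq | ⟨m', hm', heq⟩ <;> simp only [Prod.mk.injEq] at heq
  · exact absurd heq.2.1 (by simpa using h1)
  · rwa [heq.1]

lemma fiberMap_window (hr : 3 ≤ r) (hs : 1 ≤ s) (hh : IsAut (SPX r s) h)
    (hfix : ∀ v, (h v).2 = v.2) (f : ℕ → ZMod 2) (x : ZMod r) (j i : ℕ) (hij : i + j < s) :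
    fiberMap h (x + j) (window f j) ⟨i, by omega⟩ = fiberMap h x (window f 0) ⟨i + j, hij⟩ := by
  induction j generalizing i with
  | zero => simp
  | succ j ih =>
    rw [Nat.cast_succ, ← add_assoc,
      fiberMap_isShift hr hs hh hfix (isShift_window f j) (x + j) i (by omega), ih (i + 1) (by omega)]
    simp only [Nat.add_right_comm i 1 j, Nat.add_assoc]

lemma fiberMap_apply_eq_single (hr : 3 ≤ r) (hs : 1 ≤ s) (hh : IsAut (SPX r s) h)
    (hfix : ∀ v, (h v).2 = v.2) (x : ZMod r) (n : Fin s → ZMod 2) (j : Fin s) :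
    fiberMap h x n j = fiberMap h (x + j.val - (s - 1 : ℕ))
      (Pi.single ⟨s - 1, by omega⟩ (n j)) ⟨s - 1, by omega⟩ := by
  -- Slide coordinate `j` down to `0` along a word extending `n`, which forgets the coordinates
  -- below `j`, then up to `s - 1` along a word padded by zeros, which forgets those above it.
  let f₁ : ℕ → ZMod 2 := fun t => if ht : t < s then n ⟨t, ht⟩ else 0
  let f₂ : ℕ → ZMod 2 := fun t => if t < s - 1 then 0 else f₁ (t - (s - 1) + j)
  have hf₁ : window f₁ 0 = n := funext fun i => by simp [window, f₁]
  have hf₂ : window (s := s) f₂ (s - 1) = window f₁ j := funext fun i => by simp [window, f₂]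
  have hf₂' : window f₂ 0 = Pi.single (⟨s - 1, by omega⟩ : Fin s) (n j) := funext fun i => by
    by_cases hi : (i : ℕ) < s - 1
    · simp [window, f₂, hi, Fin.ext_iff, hi.ne]
    · rw [show i = ⟨s - 1, by omega⟩ from Fin.ext (by have := i.isLt; simp; omega)]
      simp [window, f₂, f₁]
  have down := fiberMap_window hr hs hh hfix f₁ x j 0 (by omega)
  have up := fiberMap_window hr hs hh hfix f₂ (x + j.val - (s - 1 : ℕ)) (s - 1) 0 (by omega)
  rw [sub_add_cancel, hf₂, hf₂'] at up
  rw [hf₁] at down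
  simp only [zero_add] at down up
  rw [← down, up]

lemma fiberMap_single_ne (hr : 3 ≤ r) (hs : 1 ≤ s) (hh : IsAut (SPX r s) h)
    (hfix : ∀ v, (h v).2 = v.2) (y : ZMod r) :
    fiberMap h y (Pi.single ⟨s - 1, by omega⟩ 1) ⟨s - 1, by omega⟩ ≠
      fiberMap h y 0 ⟨s - 1, by omega⟩ := by
  intro heq
  have hmap : fiberMap h y (Pi.single ⟨s - 1, by omega⟩ 1) = fiberMap h y 0 := funext fun i => by
    by_cases hi : i = ⟨s - 1, by omega⟩
    · rwa [hi]
    · rw [fiberMap_apply_eq_single hr hs hh hfix y _ i,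
        fiberMap_apply_eq_single hr hs hh hfix y 0 i]
      simp [hi]
  have hcol := apply_mk_eq_fiberMap hr hs hh hfix (Pi.single ⟨s - 1, by omega⟩ 1) y true
  rw [hmap, ← apply_mk_eq_fiberMap hr hs hh hfix] at hcol
  simpa using h.injective hcol

lemma exists_fiberMap_eq (hr : 3 ≤ r) (hs : 1 ≤ s) (hh : IsAut (SPX r s) h)
    (hfix : ∀ v, (h v).2 = v.2) :
    ∃ b : ZMod r → ZMod 2, ∀ x n j, fiberMap h x n j = n j + b (x + j.val) := by
  refine ⟨fun y => fiberMap h (y - (s - 1 : ℕ)) 0 ⟨s - 1, by omega⟩, fun x n j => ?_⟩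
  rw [fiberMap_apply_eq_single hr hs hh hfix]
  obtain hj | hj : n j = 0 ∨ n j = 1 := by generalize n j = t; revert t; decide
  · simp [hj]
  · rw [hj]
    have key : ∀ a c : ZMod 2, c ≠ a → c = 1 + a := by decide
    exact key _ _ (fiberMap_single_ne hr hs hh hfix _)

lemma IsAut.eq_bitFlip (hr : 3 ≤ r) (hs : 1 ≤ s) (hh : IsAut (SPX r s) h)
    (hfix : ∀ v, (h v).2 = v.2) : ∃ b, h = bitFlip b := by
  obtain ⟨b, hb⟩ := exists_fiberMap_eq hr hs hh hfix
  refine ⟨b, Equiv.ext fun ⟨n, x, ε⟩ => ?_⟩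
  rw [apply_mk_eq_fiberMap hr hs hh hfix, bitFlip_apply]
  exact Prod.ext (funext (hb x n)) rfl

end FiberAction

lemma IsAut.exists_eq_bitFlip_mul_rot (hr : 3 ≤ r) (hs : 1 ≤ s) {g : Equiv.Perm (SPXV r s)}
    (hg : IsAut (SPX r s) g) (h₀ : g (0, 0, true) = (0, 1, true)) : ∃ a, g = bitFlip a * rot := by
  have : NeZero r := ⟨by omega⟩
  have hsign := hg.sign_eq (v₀ := (0, 0, true)) (by rw [h₀])
  have hfiber (v : SPXV r s) : (g v).2.1 = v.2.1 + 1 := by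
    have := hg.fiber_sub_eq hr hs hsign v (0, 0, true)
    rw [h₀] at this
    linear_combination this
  obtain ⟨a, ha⟩ := (hg.mul isAut_rot.inv).eq_bitFlip hr hs fun v => by
    rw [Equiv.Perm.mul_apply, Prod.ext_iff, hfiber, hsign, rot_inv_apply]
    exact ⟨sub_add_cancel _ _, rfl⟩
  exact ⟨a, by rw [← ha, inv_mul_cancel_right]⟩

lemma fiber_bitFlip_mul_rot_pow_apply (a : ZMod r → ZMod 2) (k : ℕ) (v : SPXV r s) :
    (((bitFlip a * rot : Equiv.Perm (SPXV r s)) ^ k) v).2.1 = v.2.1 + k := by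
  rw [bitFlip_mul_rot_pow, Equiv.Perm.mul_apply, bitFlip_apply, rot_pow_apply]

lemma dvd_of_bitFlip_mul_rot_pow_apply_eq (a : ZMod r → ZMod 2) {k : ℕ} {v : SPXV r s}
    (h : ((bitFlip a * rot : Equiv.Perm (SPXV r s)) ^ k) v = v) : r ∣ k := by
  have hk := fiber_bitFlip_mul_rot_pow_apply a k v
  rw [h] at hk
  exact (ZMod.natCast_eq_zero_iff k r).1 (by linear_combination -hk)

lemma bitFlip_mul_rot_pow_eq_one_of_apply_eq [NeZero r] (hs : 1 ≤ s) (a : ZMod r → ZMod 2)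
    {k : ℕ} {v : SPXV r s} (h : ((bitFlip a * rot : Equiv.Perm (SPXV r s)) ^ k) v = v) :
    (bitFlip a * rot : Equiv.Perm (SPXV r s)) ^ k = 1 := by
  obtain ⟨q, rfl⟩ := dvd_of_bitFlip_mul_rot_pow_apply_eq a h
  rw [pow_mul, bitFlip_mul_rot_pow_card, bitFlip_pow] at h ⊢
  have hq : q • ∑ z, a z = 0 := by
    simpa [bitFlip_apply] using congrFun (congrArg Prod.fst h) ⟨0, hs⟩
  rw [← bitFlip_zero]
  exact congrArg bitFlip (funext fun _ => hq)

lemma orderOf_bitFlip_mul_rot [NeZero r] (a : ZMod r → ZMod 2) :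
    orderOf (bitFlip a * rot : Equiv.Perm (SPXV r s)) = r ∨
      orderOf (bitFlip a * rot : Equiv.Perm (SPXV r s)) = 2 * r := by
  obtain ⟨q, hq⟩ := dvd_of_bitFlip_mul_rot_pow_apply_eq a (v := ((0, 0, true) : SPXV r s))
    (by rw [pow_orderOf_eq_one]; rfl)
  have hsq : orderOf ((bitFlip a * rot : Equiv.Perm (SPXV r s)) ^ r) ∣ 2 :=
    orderOf_dvd_of_pow_eq_one (by rw [bitFlip_mul_rot_pow_card, bitFlip_sq])
  rw [orderOf_pow_of_dvd (NeZero.ne r) ⟨q, hq⟩, hq, Nat.mul_div_cancel_left q (NeZero.pos r)] at hsq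
  rcases (Nat.dvd_prime Nat.prime_two).1 hsq with rfl | rfl
  exacts [Or.inl (by rw [hq, mul_one]), Or.inr (by rw [hq, mul_comm])]

theorem stmt5_general (r s : ℕ) (hr : 5 ≤ r) (hs : 1 ≤ s)
    (G : Subgroup (Equiv.Perm (SPXV r s)))
    (hAut : ∀ g ∈ G, ∀ u v, (SPX r s).Adj (g u) (g v) ↔ (SPX r s).Adj u v)
    (hTrans : ∀ u v : SPXV r s, ∃ g ∈ G, g u = v) :
    ∃ g ∈ G,
      (∀ h ∈ Subgroup.zpowers g, ∀ v : SPXV r s, h v = v → h = 1) ∧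
      r ≤ orderOf g ∧ (orderOf g = r ∨ orderOf g = 2 * r) := by
  have : NeZero r := ⟨by omega⟩
  obtain ⟨g, hgG, hg₀⟩ := hTrans (0, 0, true) (0, 1, true)
  obtain ⟨a, rfl⟩ := IsAut.exists_eq_bitFlip_mul_rot (by omega) hs (hAut g hgG) hg₀
  have hord := orderOf_bitFlip_mul_rot (s := s) a
  refine ⟨_, hgG, ?_, by omega, hord⟩
  rintro _ hk v hv
  obtain ⟨k, rfl⟩ := mem_powers_iff_mem_zpowers.2 hk
  exact bitFlip_mul_rot_pow_eq_one_of_apply_eq hs a hv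

theorem stmt5 (r s : ℕ) (hr : 5 ≤ r) (hs : 1 ≤ s) (hsr : s ≤ r - 1)
    (G : Subgroup (Equiv.Perm (SPXV r s)))
    (hAut : ∀ g ∈ G, ∀ u v, (SPX r s).Adj (g u) (g v) ↔ (SPX r s).Adj u v)
    (hTrans : ∀ u v : SPXV r s, ∃ g ∈ G, g u = v) :
    ∃ g ∈ G,
      (∀ h ∈ Subgroup.zpowers g, ∀ v : SPXV r s, h v = v → h = 1) ∧
      r ≤ orderOf g ∧ (orderOf g = r ∨ orderOf g = 2 * r) :=
  stmt5_general r s hr hs G hAut hTrans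

end Stmt5
end

section
/- Let Γ be a finite connected cubic G-vertex-transitive graph and let N be an abelian normal subgroup of G such that 3 divides the order of the stabilizer N_v of some vertex v in N. Then Γ is isomorphic to the complete bipartite graph K_{3,3}. -/
/-!
Take `n ∈ N_v` of order 3. An automorphism of order 3 that fixes both ends of an edge of a
connected cubic graph is trivial, since it cannot move exactly two of the three neighbours of a
fixed vertex. Hence `n` permutes the neighbours `a, n a, n² a` of `v` cyclically. Conjugating `n`
by an element of `G` sending `v` to `a` gives `m ∈ N` fixing `a` and permuting `v, m v, m² v`
cyclically. As `N` is abelian, `m` fixes the `n`-orbit `Γ(v)` pointwise and `n` fixes `Γ(a)`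
pointwise, so every vertex of `Γ(a)` has neighbourhood `Γ(v)` and vice versa. By connectivity
these six vertices are all of `Γ`, which is therefore `K_{3,3}`.
-/

open Equiv

lemma Equiv.Perm.pow_three_apply {V : Type*} {n : Perm V} (hn : n ^ 3 = 1) (y : V) :
    n (n (n y)) = y := by
  simpa [pow_succ] using congr($hn y)

namespace SimpleGraph

variable {V : Type*} {Γ : SimpleGraph V}

lemma neighborSet_eq_orbit [Finite V] {n : Perm V} (hn : n ^ 3 = 1)
    (hΓn : ∀ u w, Γ.Adj u w → Γ.Adj (n u) (n w)) {w a : V} (hdeg : (Γ.neighborSet w).ncard ≤ 3)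
    (hw : n w = w) (ha : Γ.Adj w a) (hna : n a ≠ a) :
    Γ.neighborSet w = {a, n a, n (n a)} := by
  have hadj : ∀ y, Γ.Adj w y → Γ.Adj w (n y) := fun y hy => by
    simpa [hw] using hΓn w y hy
  have hcard : ({a, n a, n (n a)} : Set V).ncard = 3 := by
    refine Set.ncard_eq_three.2 ⟨a, n a, n (n a), hna.symm, fun h => hna ?_,
      fun h => hna (n.injective h).symm, rfl⟩
    calc n a = n (n (n a)) := by rw [← h]
      _ = a := Perm.pow_three_apply hn a
  refine (Set.eq_of_subset_of_ncard_le ?_ (hcard ▸ hdeg)).symm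
  simp only [Set.insert_subset_iff, Set.singleton_subset_iff, mem_neighborSet]
  exact ⟨ha, hadj a ha, hadj _ (hadj a ha)⟩

lemma apply_eq_self_of_adj_of_apply_eq_self [Finite V] {n : Perm V} (hn : n ^ 3 = 1)
    (hΓn : ∀ u w, Γ.Adj u w → Γ.Adj (n u) (n w)) {w x y : V}
    (hdeg : (Γ.neighborSet w).ncard ≤ 3) (hw : n w = w) (hx : Γ.Adj w x) (hnx : n x = x)
    (hy : Γ.Adj w y) : n y = y := by
  by_contra hny
  have hx' : x ∈ ({y, n y, n (n y)} : Set V) := neighborSet_eq_orbit hn hΓn hdeg hw hy hny ▸ hx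
  rcases hx' with rfl | rfl | rfl
  · exact hny hnx
  · exact hny (n.injective hnx)
  · exact hny (by simpa [Perm.pow_three_apply hn] using congr(n $hnx))

lemma Connected.mem_of_forall_adj_mem (hconn : Γ.Connected) {S : Set V}
    (hS : ∀ x ∈ S, ∀ y, Γ.Adj x y → y ∈ S) {u : V} (hu : u ∈ S) (w : V) : w ∈ S := by
  obtain ⟨p⟩ := hconn.preconnected u w
  induction p with
  | nil => exact hu
  | cons h _ ih => exact ih (hS _ hu _ h)

lemma eq_one_of_apply_eq_self_of_adj [Finite V] (hconn : Γ.Connected)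
    (hdeg : ∀ w, (Γ.neighborSet w).ncard ≤ 3) {n : Perm V} (hn : n ^ 3 = 1)
    (hΓn : ∀ u w, Γ.Adj u w → Γ.Adj (n u) (n w)) {w x : V} (hwx : Γ.Adj w x)
    (hw : n w = w) (hx : n x = x) : n = 1 := by
  set S : Set V := {y | n y = y ∧ ∀ z, Γ.Adj y z → n z = z}
  have hwS : w ∈ S := ⟨hw, fun z hz =>
    apply_eq_self_of_adj_of_apply_eq_self hn hΓn (hdeg w) hw hwx hx hz⟩
  have hS : ∀ y ∈ S, ∀ z, Γ.Adj y z → z ∈ S := fun y hy z hz =>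
    ⟨hy.2 z hz, fun u hu =>
      apply_eq_self_of_adj_of_apply_eq_self hn hΓn (hdeg z) (hy.2 z hz) hz.symm hy.1 hu⟩
  ext y
  exact (hconn.mem_of_forall_adj_mem hS hwS y).1

lemma neighborSet_apply_eq {σ : Perm V} (hσ : ∀ u w, Γ.Adj (σ u) (σ w) ↔ Γ.Adj u w) {v : V}
    (hfix : ∀ y ∈ Γ.neighborSet v, σ y = y) : Γ.neighborSet (σ v) = Γ.neighborSet v := by
  ext y
  obtain ⟨z, rfl⟩ := σ.surjective y
  simp only [mem_neighborSet, hσ]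
  refine ⟨fun h => by rwa [hfix z h], fun h => ?_⟩
  rwa [σ.injective (hfix _ h)] at h

lemma neighborSet_eq_of_mem_orbit {σ : Perm V} (hσ : ∀ u w, Γ.Adj (σ u) (σ w) ↔ Γ.Adj u w)
    {v : V} (hfix : ∀ y ∈ Γ.neighborSet v, σ y = y) {x : V}
    (hx : x ∈ ({v, σ v, σ (σ v)} : Set V)) : Γ.neighborSet x = Γ.neighborSet v := by
  have h1 := neighborSet_apply_eq hσ hfix
  rcases hx with rfl | rfl | rfl
  · rfl
  · exact h1
  · rw [neighborSet_apply_eq hσ (h1 ▸ hfix), h1]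

lemma apply_eq_self_of_mem_orbit {m n : Perm V} (hmn : Commute m n) {a : V} (ha : m a = a)
    {y : V} (hy : y ∈ ({a, n a, n (n a)} : Set V)) : m y = y := by
  have hcomm : ∀ z, m (n z) = n (m z) := fun z => congr($(hmn.eq) z)
  rcases hy with rfl | rfl | rfl <;> simp only [hcomm, ha]

lemma Connected.nonempty_iso_completeBipartiteGraph (hconn : Γ.Connected) {L R : Set V}
    (hL : ∀ x ∈ L, Γ.neighborSet x = R) (hR : ∀ y ∈ R, Γ.neighborSet y = L) (hne : L.Nonempty) :
    Nonempty (Γ ≃g completeBipartiteGraph L R) := by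
  classical
  have hdisj : ∀ x ∈ L, x ∉ R := fun x hxL hxR =>
    Γ.loopless.irrefl x (by rw [← mem_neighborSet, hL x hxL]; exact hxR)
  have hcover : ∀ x, x ∈ L ∪ R := by
    refine hconn.mem_of_forall_adj_mem ?_ (Or.inl hne.some_mem)
    rintro x (hx | hx) y hy
    · exact Or.inr (hL x hx ▸ hy)
    · exact Or.inl (hR x hx ▸ hy)
  obtain rfl : R = Lᶜ := by
    ext x
    have := hdisj x
    have := hcover x
    simp only [Set.mem_union, Set.mem_compl_iff] at *
    tauto
  have hadj : ∀ x y, Γ.Adj x y ↔ (x ∈ L ↔ y ∈ Lᶜ) := by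
    intro x y
    by_cases hx : x ∈ L
    · simp [hx, ← mem_neighborSet, hL x hx]
    · simp [hx, ← mem_neighborSet, hR x hx]
  refine ⟨Iso.symm ⟨Equiv.Set.sumCompl L, ?_⟩⟩
  rintro (⟨x, hx⟩ | ⟨x, hx : x ∉ L⟩) (⟨y, hy⟩ | ⟨y, hy : y ∉ L⟩) <;> simp [hadj, hx, hy]

lemma Connected.nonempty_iso_completeBipartiteGraph_fin_three [Finite V] (hconn : Γ.Connected)
    (hcubic : ∀ w, (Γ.neighborSet w).ncard = 3) {n m : Perm V} (hn : n ^ 3 = 1) (hm : m ^ 3 = 1)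
    (hΓn : ∀ u w, Γ.Adj (n u) (n w) ↔ Γ.Adj u w) (hΓm : ∀ u w, Γ.Adj (m u) (m w) ↔ Γ.Adj u w)
    (hn1 : n ≠ 1) (hm1 : m ≠ 1) (hmn : Commute m n) {v a : V} (hva : Γ.Adj v a)
    (hnv : n v = v) (hma : m a = a) :
    Nonempty (Γ ≃g completeBipartiteGraph (Fin 3) (Fin 3)) := by
  have hdeg w : (Γ.neighborSet w).ncard ≤ 3 := (hcubic w).le
  have hna : n a ≠ a := fun h =>
    hn1 (eq_one_of_apply_eq_self_of_adj hconn hdeg hn (hΓn · · |>.2) hva hnv h)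
  have hmv : m v ≠ v := fun h =>
    hm1 (eq_one_of_apply_eq_self_of_adj hconn hdeg hm (hΓm · · |>.2) hva h hma)
  have hR := neighborSet_eq_orbit hn (hΓn · · |>.2) (hdeg v) hnv hva hna
  have hL := neighborSet_eq_orbit hm (hΓm · · |>.2) (hdeg a) hma hva.symm hmv
  have hmR : ∀ y ∈ Γ.neighborSet v, m y = y := fun y hy =>
    apply_eq_self_of_mem_orbit hmn hma (hR ▸ hy)
  have hnL : ∀ y ∈ Γ.neighborSet a, n y = y := fun y hy =>
    apply_eq_self_of_mem_orbit hmn.symm hnv (hL ▸ hy)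
  obtain ⟨e⟩ := hconn.nonempty_iso_completeBipartiteGraph
    (fun x hx => neighborSet_eq_of_mem_orbit hΓm hmR (hL ▸ hx))
    (fun y hy => neighborSet_eq_of_mem_orbit hΓn hnL (hR ▸ hy)) ⟨v, hva.symm⟩
  have hcard : ∀ w, Nat.card (Γ.neighborSet w) = 3 := fun w =>
    (Nat.card_coe_set_eq _).trans (hcubic w)
  exact ⟨e.trans (completeBipartiteGraphCongr (Finite.equivFinOfCardEq (hcard a))
    (Finite.equivFinOfCardEq (hcard v)))⟩

end SimpleGraph

namespace Stmt6

theorem stmt6 {V : Type} [Fintype V] (Γ : SimpleGraph V)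
    (hconn : Γ.Connected)
    (hcubic : ∀ v : V, (Γ.neighborSet v).ncard = 3)
    (G : Subgroup (Equiv.Perm V))
    (hAut : ∀ g ∈ G, ∀ u v : V, Γ.Adj (g u) (g v) ↔ Γ.Adj u v)
    (hTrans : ∀ u v : V, ∃ g ∈ G, g u = v)
    (N : Subgroup (Equiv.Perm V)) (hNG : N ≤ G)
    (hNnormal : ∀ g ∈ G, ∀ n ∈ N, g * n * g⁻¹ ∈ N)
    (hNab : ∀ a ∈ N, ∀ b ∈ N, a * b = b * a)
    (v : V)
    (hdvd : 3 ∣ Nat.card ↥(N ⊓ MulAction.stabilizer (Equiv.Perm V) v)) :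
    Nonempty (Γ ≃g completeBipartiteGraph (Fin 3) (Fin 3)) := by
  obtain ⟨n, hnH, hn3, hn1⟩ :
      ∃ n ∈ N ⊓ MulAction.stabilizer (Perm V) v, n ^ 3 = 1 ∧ n ≠ 1 := by
    obtain ⟨x, hx⟩ := exists_prime_orderOf_dvd_card' 3 hdvd
    exact ⟨x, x.2, orderOf_eq_prime_iff.1 (by rwa [Subgroup.orderOf_coe])⟩
  obtain ⟨hnN, hnv⟩ := Subgroup.mem_inf.1 hnH
  rw [MulAction.mem_stabilizer_iff, Perm.smul_def] at hnv
  obtain ⟨a, hva⟩ := Set.nonempty_of_ncard_ne_zero (s := Γ.neighborSet v) (by simp [hcubic v])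
  obtain ⟨g, hgG, rfl⟩ := hTrans v a
  have hΓ : ∀ σ ∈ N, ∀ u w, Γ.Adj (σ u) (σ w) ↔ Γ.Adj u w := fun σ hσ => hAut σ (hNG hσ)
  set m := g * n * g⁻¹
  have hmN : m ∈ N := hNnormal g hgG n hnN
  have hm3 : m ^ 3 = 1 := by simp [m, conj_pow, hn3]
  have hm1 : m ≠ 1 := fun h => hn1 (conj_eq_one_iff.1 h)
  have hma : m (g v) = g v := by simp [m, Perm.mul_apply, hnv]
  exact hconn.nonempty_iso_completeBipartiteGraph_fin_three hcubic hn3 hm3 (hΓ n hnN)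
    (hΓ m hmN) hn1 hm1 (hNab m hmN n hnN) hva hnv hma

end Stmt6
end

section
/- Let Γ be a finite connected cubic G-vertex-transitive graph and suppose that for a vertex v the permutation group G_v^{Γ(v)} induced by the vertex stabilizer G_v on the neighbourhood Γ(v) has order 2. Then: (i) every vertex u of Γ has a unique neighbour u' with G_u = G_{u'}; (ii) the set T of all such edges {u,u'} is a perfect matching of Γ and is a single orbit of G on the edges of Γ (and G has exactly two orbits on edges); and (iii) the graph obtained from Γ by deleting the edges of T is a disjoint union of cycles, all of the same length. -/
/-!
Fix a neighbour-moving element `g` of `G_v`. Since `G_v^{Γ(v)}` has only two elements, every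
element of `G_v` acts on `Γ(v)` either trivially or as `g` does, and `g²` acts trivially; so `g`
induces a transposition of the three neighbours, with a fixed point `v'` fixed by all of `G_v`.
Thus `G_v ≤ G_{v'}`, and the two stabilisers are conjugate in the finite group `G`, hence equal,
while the other two neighbours are swapped by `g`. Transporting this by vertex-transitivity gives
the mate map `u ↦ u'`, an involution commuting with `G`. Everything else follows: `G` is transitive
on the arcs `(u, u')` and on the remaining arcs, and it acts vertex-transitively on `Γ - T`, a
2-regular graph, so all its components (cycles) have the same size.
-/

namespace Stmt7

/-- The permutation group induced by the stabiliser `G_v` on the neighbourhood `Γ(v)`,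
encoded as the set of restrictions to `Γ(v)` of elements of `G` fixing `v`. -/
def inducedNbhd {V : Type} (Γ : SimpleGraph V) (G : Subgroup (Equiv.Perm V)) (v : V) :
    Set (Γ.neighborSet v → V) :=
  {f | ∃ g ∈ G, (g : Equiv.Perm V) v = v ∧ ∀ u : Γ.neighborSet v, f u = g u.1}

/-- The set of edges `{u,u'}` of `Γ` whose endpoints have the same stabiliser in `G`. -/
def matchingEdges {V : Type} (Γ : SimpleGraph V) (G : Subgroup (Equiv.Perm V)) :
    Set (Sym2 V) :=
  {e | ∃ u u' : V, e = s(u, u') ∧ Γ.Adj u u' ∧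
    ∀ g ∈ G, ((g : Equiv.Perm V) u = u ↔ (g : Equiv.Perm V) u' = u')}

open Equiv MulAction SimpleGraph

variable {V : Type}

def SameStab (G : Subgroup (Perm V)) (u w : V) : Prop :=
  ∀ g ∈ G, (g u = u ↔ g w = w)

section Stabilizers

variable {G : Subgroup (Perm V)} {u w : V}

theorem SameStab.symm (h : SameStab G u w) : SameStab G w u :=
  fun g hg => (h g hg).symm

theorem sameStab_iff_stabilizer_eq : SameStab G u w ↔ stabilizer G u = stabilizer G w := by
  simp only [SameStab, Subgroup.ext_iff, mem_stabilizer_iff, Subgroup.smul_def, Perm.smul_def,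
    Subtype.forall]

theorem sameStab_apply_iff {k : Perm V} (hk : k ∈ G) :
    SameStab G (k u) (k w) ↔ SameStab G u w := by
  have hsmul : ∀ x : V, k x = (⟨k, hk⟩ : G) • x := fun _ => rfl
  rw [sameStab_iff_stabilizer_eq, sameStab_iff_stabilizer_eq, hsmul, hsmul,
    stabilizer_smul_eq_stabilizer_map_conj, stabilizer_smul_eq_stabilizer_map_conj,
    (Subgroup.map_injective (MulAut.conj _).injective).eq_iff]

theorem sameStab_of_forall_apply_eq [Finite V] (hTrans : ∀ u w : V, ∃ g ∈ G, g u = w)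
    (h : ∀ g ∈ G, g u = u → g w = w) : SameStab G u w := by
  rw [sameStab_iff_stabilizer_eq]
  obtain ⟨k, hk, hku⟩ := hTrans u w
  refine Subgroup.eq_of_le_of_card_ge (fun g hg => ?_) ?_
  · simp only [mem_stabilizer_iff, Subgroup.smul_def, Perm.smul_def] at hg ⊢
    exact h g g.2 hg
  · exact (Nat.card_congr (stabilizerEquivStabilizer (g := ⟨k, hk⟩) hku.symm).toEquiv).ge

end Stabilizers

/-- The conclusion `s = {t, y, g y}` for all `y ≠ t` says that `g` acts on `s` as a transposition
with fixed point `t`. -/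
theorem exists_fixed_eq_insert_of_involutive {α : Type*} {s : Set α} (hs : s.ncard = 3)
    {g : Perm α} (hmaps : Set.MapsTo g s s) (hinv : ∀ x ∈ s, g (g x) = x) {x : α} (hx : x ∈ s)
    (hgx : g x ≠ x) : ∃ t ∈ s, g t = t ∧ ∀ y ∈ s, y ≠ t → s = {t, y, g y} := by
  have hfin : s.Finite := Set.finite_of_ncard_ne_zero (by omega)
  obtain ⟨t, hts, htx⟩ : ∃ t ∈ s, t ∉ ({x, g x} : Set α) :=
    Set.exists_mem_notMem_of_ncard_lt_ncard (by rw [hs, Set.ncard_pair hgx.symm]; omega)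
  simp only [Set.mem_insert_iff, Set.mem_singleton_iff, not_or] at htx
  have hs_eq : s = {t, x, g x} := by
    refine (Set.eq_of_subset_of_ncard_le ?_ ?_ hfin).symm
    · simp only [Set.insert_subset_iff, Set.singleton_subset_iff]
      exact ⟨hts, hx, hmaps hx⟩
    · rw [hs, Set.ncard_eq_three.mpr ⟨t, x, g x, htx.1, htx.2, hgx.symm, rfl⟩]
  have hgt : g t = t := by
    have hgts := hmaps hts
    rw [hs_eq] at hgts
    rcases hgts with h | h | h
    · exact h
    · exact absurd (g.injective (h.trans (hinv x hx).symm)) htx.2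
    · exact absurd (g.injective h) htx.1
  refine ⟨t, hts, hgt, fun y hy hyt => ?_⟩
  rw [hs_eq] at hy
  rcases hy with rfl | rfl | rfl
  · exact absurd rfl hyt
  · exact hs_eq
  · rw [hinv x hx, hs_eq, Set.pair_comm]

def restrictNbhd (Γ : SimpleGraph V) (v : V) (g : Perm V) : Γ.neighborSet v → V :=
  fun w => g w

section Local

variable {Γ : SimpleGraph V} {G : Subgroup (Perm V)} {v : V}

theorem restrict_mem_inducedNbhd {g : Perm V} (hg : g ∈ G) (hgv : g v = v) :
    restrictNbhd Γ v g ∈ inducedNbhd Γ G v :=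
  ⟨g, hg, hgv, fun _ => rfl⟩

theorem exists_stab_moves_neighbor (hloc : (inducedNbhd Γ G v).ncard = 2) :
    ∃ g ∈ G, g v = v ∧ ∃ w ∈ Γ.neighborSet v, g w ≠ w := by
  obtain ⟨f, ⟨g, hg, hgv, hfg⟩, hne⟩ :=
    Set.exists_ne_of_one_lt_ncard (s := inducedNbhd Γ G v) (by omega) (restrictNbhd Γ v 1)
  refine ⟨g, hg, hgv, ?_⟩
  by_contra! h
  exact hne (funext fun w => (hfg w).trans (h w w.2))

theorem stab_eqOn_or_eqOn (hloc : (inducedNbhd Γ G v).ncard = 2) {g : Perm V} (hg : g ∈ G)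
    (hgv : g v = v) (hmove : ∃ w ∈ Γ.neighborSet v, g w ≠ w) {h : Perm V} (hh : h ∈ G)
    (hhv : h v = v) :
    (∀ w ∈ Γ.neighborSet v, h w = w) ∨ ∀ w ∈ Γ.neighborSet v, h w = g w := by
  obtain ⟨x, hx, hgx⟩ := hmove
  have hne : restrictNbhd Γ v 1 ≠ restrictNbhd Γ v g :=
    fun e => hgx (congrFun e ⟨x, hx⟩).symm
  have hpair : inducedNbhd Γ G v = {restrictNbhd Γ v 1, restrictNbhd Γ v g} := by
    refine (Set.eq_of_subset_of_ncard_le ?_ ?_ (Set.finite_of_ncard_ne_zero (by omega))).symm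
    · simp only [Set.insert_subset_iff, Set.singleton_subset_iff]
      exact ⟨restrict_mem_inducedNbhd G.one_mem rfl, restrict_mem_inducedNbhd hg hgv⟩
    · rw [hloc, Set.ncard_pair hne]
  have hmem := restrict_mem_inducedNbhd (Γ := Γ) hh hhv
  rw [hpair] at hmem
  rcases hmem with e | e
  · exact Or.inl fun w hw => congrFun e ⟨w, hw⟩
  · exact Or.inr fun w hw => congrFun e ⟨w, hw⟩

theorem exists_local_transposition [Finite V] (hcubic : (Γ.neighborSet v).ncard = 3)
    (hAut : ∀ g ∈ G, ∀ u w : V, Γ.Adj (g u) (g w) ↔ Γ.Adj u w)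
    (hTrans : ∀ u w : V, ∃ g ∈ G, g u = w) (hloc : (inducedNbhd Γ G v).ncard = 2) :
    ∃ g ∈ G, g v = v ∧ ∃ t ∈ Γ.neighborSet v, SameStab G v t ∧
      ∀ x ∈ Γ.neighborSet v, x ≠ t → Γ.neighborSet v = {t, x, g x} := by
  obtain ⟨g, hg, hgv, x, hx, hgx⟩ := exists_stab_moves_neighbor hloc
  have hdich := fun h (hh : h ∈ G) hhv => stab_eqOn_or_eqOn hloc hg hgv ⟨x, hx, hgx⟩ hh hhv
  have hmaps : Set.MapsTo g (Γ.neighborSet v) (Γ.neighborSet v) := fun w hw => by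
    simpa only [SimpleGraph.mem_neighborSet, hgv] using (hAut g hg v w).mpr hw
  have hinv : ∀ w ∈ Γ.neighborSet v, g (g w) = w := by
    intro w hw
    rcases hdich (g * g) (G.mul_mem hg hg) (by simp [hgv]) with h | h
    · exact h w hw
    · have hfix : g w = w := g.injective (h w hw)
      rw [hfix, hfix]
  obtain ⟨t, ht, hgt, hN⟩ := exists_fixed_eq_insert_of_involutive hcubic hmaps hinv hx hgx
  refine ⟨g, hg, hgv, t, ht, sameStab_of_forall_apply_eq hTrans fun h hh hhv => ?_, hN⟩
  rcases hdich h hh hhv with e | e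
  exacts [e t ht, (e t ht).trans hgt]

theorem existsUnique_adj_sameStab_of_inducedNbhd [Finite V]
    (hcubic : (Γ.neighborSet v).ncard = 3)
    (hAut : ∀ g ∈ G, ∀ u w : V, Γ.Adj (g u) (g w) ↔ Γ.Adj u w)
    (hTrans : ∀ u w : V, ∃ g ∈ G, g u = w) (hloc : (inducedNbhd Γ G v).ncard = 2) :
    ∃! t, Γ.Adj v t ∧ SameStab G v t := by
  obtain ⟨g, hg, hgv, t, ht, hvt, hN⟩ := exists_local_transposition hcubic hAut hTrans hloc
  refine ⟨t, ⟨ht, hvt⟩, fun x ⟨hx, hvx⟩ => ?_⟩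
  by_contra hxt
  have hN' := hN x hx hxt
  rw [(hvx g hg).mp hgv, Set.pair_eq_singleton] at hN'
  rw [hN', Set.ncard_pair (Ne.symm hxt)] at hcubic
  omega

theorem exists_stab_apply_eq_of_not_sameStab [Finite V] (hcubic : (Γ.neighborSet v).ncard = 3)
    (hAut : ∀ g ∈ G, ∀ u w : V, Γ.Adj (g u) (g w) ↔ Γ.Adj u w)
    (hTrans : ∀ u w : V, ∃ g ∈ G, g u = w) (hloc : (inducedNbhd Γ G v).ncard = 2) {x y : V}
    (hx : Γ.Adj v x) (hy : Γ.Adj v y) (hvx : ¬SameStab G v x) (hvy : ¬SameStab G v y) :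
    ∃ h ∈ G, h v = v ∧ h x = y := by
  obtain ⟨g, hg, hgv, t, -, hvt, hN⟩ := exists_local_transposition hcubic hAut hTrans hloc
  have hy' : y ∈ Γ.neighborSet v := hy
  rw [hN x hx fun e => hvx (e ▸ hvt)] at hy'
  rcases hy' with rfl | rfl | rfl
  · exact absurd hvt hvy
  · exact ⟨1, G.one_mem, rfl, rfl⟩
  · exact ⟨g, hg, hgv, rfl⟩

theorem existsUnique_adj_sameStab [Finite V] (hcubic : (Γ.neighborSet v).ncard = 3)
    (hAut : ∀ g ∈ G, ∀ u w : V, Γ.Adj (g u) (g w) ↔ Γ.Adj u w)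
    (hTrans : ∀ u w : V, ∃ g ∈ G, g u = w) (hloc : (inducedNbhd Γ G v).ncard = 2) (u : V) :
    ∃! u', Γ.Adj u u' ∧ SameStab G u u' := by
  obtain ⟨k, hk, rfl⟩ := hTrans v u
  refine (Equiv.existsUnique_congr (e := k) fun w => ?_).mp
    (existsUnique_adj_sameStab_of_inducedNbhd hcubic hAut hTrans hloc)
  rw [hAut k hk, sameStab_apply_iff hk]

end Local

theorem matchingEdges_subset_edgeSet {Γ : SimpleGraph V} {G : Subgroup (Perm V)} :
    matchingEdges Γ G ⊆ Γ.edgeSet := by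
  rintro _ ⟨u, w, rfl, hadj, -⟩
  exact hadj

/-- `m` sends each vertex `u` to the paper's `u'`. -/
def IsMateMap (Γ : SimpleGraph V) (G : Subgroup (Perm V)) (m : V → V) : Prop :=
  ∀ u w, Γ.Adj u w ∧ SameStab G u w ↔ w = m u

namespace IsMateMap

variable {Γ : SimpleGraph V} {G : Subgroup (Perm V)} {m : V → V} (hm : IsMateMap Γ G m)
include hm

theorem adj (u : V) : Γ.Adj u (m u) := ((hm u _).2 rfl).1

theorem sameStab (u : V) : SameStab G u (m u) := ((hm u _).2 rfl).2

theorem mate_mate (u : V) : m (m u) = u :=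
  ((hm (m u) u).1 ⟨(hm.adj u).symm, (hm.sameStab u).symm⟩).symm

theorem apply_mate (hAut : ∀ g ∈ G, ∀ u w : V, Γ.Adj (g u) (g w) ↔ Γ.Adj u w) {g : Perm V}
    (hg : g ∈ G) (u : V) : g (m u) = m (g u) :=
  (hm _ _).1 ⟨(hAut g hg _ _).2 (hm.adj u), (sameStab_apply_iff hg).2 (hm.sameStab u)⟩

theorem mk_mem_matchingEdges_iff {u w : V} : s(u, w) ∈ matchingEdges Γ G ↔ w = m u := by
  constructor
  · rintro ⟨a, b, hab, hadj, hss⟩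
    have hba := (hm a b).1 ⟨hadj, hss⟩
    rcases Sym2.eq_iff.mp hab with ⟨rfl, rfl⟩ | ⟨rfl, rfl⟩
    · exact hba
    · rw [hba, hm.mate_mate]
  · rintro rfl
    exact ⟨u, m u, rfl, hm.adj u, hm.sameStab u⟩

theorem matchingEdges_eq_range : matchingEdges Γ G = Set.range fun u => s(u, m u) := by
  ext e
  induction e using Sym2.ind with
  | _ u w =>
    rw [hm.mk_mem_matchingEdges_iff]
    constructor
    · rintro rfl
      exact ⟨u, rfl⟩
    · rintro ⟨a, ha⟩
      rcases Sym2.eq_iff.mp ha with ⟨rfl, rfl⟩ | ⟨rfl, rfl⟩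
      · rfl
      · exact (hm.mate_mate a).symm

theorem existsUnique_mem_matchingEdges (w : V) : ∃! e, e ∈ matchingEdges Γ G ∧ w ∈ e := by
  refine ⟨s(w, m w), ⟨hm.mk_mem_matchingEdges_iff.2 rfl, Sym2.mem_mk_left _ _⟩, ?_⟩
  rintro e ⟨he, hwe⟩
  rw [hm.matchingEdges_eq_range] at he
  obtain ⟨u, rfl⟩ := he
  rcases Sym2.mem_iff.mp hwe with rfl | rfl
  · rfl
  · rw [hm.mate_mate, Sym2.eq_swap]

theorem sym2_map_mem_matchingEdges (hAut : ∀ g ∈ G, ∀ u w : V, Γ.Adj (g u) (g w) ↔ Γ.Adj u w)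
    {g : Perm V} (hg : g ∈ G) {e : Sym2 V} (he : e ∈ matchingEdges Γ G) :
    Sym2.map g e ∈ matchingEdges Γ G := by
  rw [hm.matchingEdges_eq_range] at he ⊢
  obtain ⟨u, rfl⟩ := he
  exact ⟨g u, by rw [Sym2.map_mk, hm.apply_mate hAut hg]⟩

theorem exists_sym2_map_eq_of_mem_matchingEdges
    (hAut : ∀ g ∈ G, ∀ u w : V, Γ.Adj (g u) (g w) ↔ Γ.Adj u w)
    (hTrans : ∀ u w : V, ∃ g ∈ G, g u = w) {e₁ e₂ : Sym2 V} (he₁ : e₁ ∈ matchingEdges Γ G)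
    (he₂ : e₂ ∈ matchingEdges Γ G) : ∃ g ∈ G, Sym2.map g e₁ = e₂ := by
  rw [hm.matchingEdges_eq_range] at he₁ he₂
  obtain ⟨u, rfl⟩ := he₁
  obtain ⟨w, rfl⟩ := he₂
  obtain ⟨g, hg, rfl⟩ := hTrans u w
  exact ⟨g, hg, by rw [Sym2.map_mk, hm.apply_mate hAut hg]⟩

theorem mk_mem_edgeSet_diff_iff {u w : V} :
    s(u, w) ∈ Γ.edgeSet \ matchingEdges Γ G ↔ Γ.Adj u w ∧ w ≠ m u := by
  rw [Set.mem_sdiff, SimpleGraph.mem_edgeSet, hm.mk_mem_matchingEdges_iff]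

theorem diff_matchingEdges_nonempty {v : V} (hv : 1 < (Γ.neighborSet v).ncard) :
    (Γ.edgeSet \ matchingEdges Γ G).Nonempty := by
  obtain ⟨w, hw, hwm⟩ := Set.exists_ne_of_one_lt_ncard hv (m v)
  exact ⟨s(v, w), hm.mk_mem_edgeSet_diff_iff.2 ⟨hw, hwm⟩⟩

theorem exists_apply_eq_apply_eq [Finite V] {v : V} (hcubic : (Γ.neighborSet v).ncard = 3)
    (hAut : ∀ g ∈ G, ∀ u w : V, Γ.Adj (g u) (g w) ↔ Γ.Adj u w)
    (hTrans : ∀ u w : V, ∃ g ∈ G, g u = w) (hloc : (inducedNbhd Γ G v).ncard = 2)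
    {p₁ q₁ p₂ q₂ : V} (h₁ : Γ.Adj p₁ q₁ ∧ q₁ ≠ m p₁) (h₂ : Γ.Adj p₂ q₂ ∧ q₂ ≠ m p₂) :
    ∃ g ∈ G, g p₁ = p₂ ∧ g q₁ = q₂ := by
  have toV : ∀ p q, Γ.Adj p q ∧ q ≠ m p →
      ∃ h ∈ G, h p = v ∧ Γ.Adj v (h q) ∧ ¬SameStab G v (h q) := by
    rintro p q ⟨hpq, hqm⟩
    obtain ⟨h, hh, rfl⟩ := hTrans p v
    refine ⟨h, hh, rfl, (hAut h hh p q).2 hpq, fun hss => hqm (h.injective ?_)⟩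
    rw [hm.apply_mate hAut hh]
    exact (hm _ _).1 ⟨(hAut h hh p q).2 hpq, hss⟩
  obtain ⟨h₁, hh₁, hp₁, hadj₁, hss₁⟩ := toV p₁ q₁ h₁
  obtain ⟨h₂, hh₂, hp₂, hadj₂, hss₂⟩ := toV p₂ q₂ h₂
  obtain ⟨g, hg, hgv, hgq⟩ :=
    exists_stab_apply_eq_of_not_sameStab hcubic hAut hTrans hloc hadj₁ hadj₂ hss₁ hss₂
  refine ⟨h₂⁻¹ * g * h₁, G.mul_mem (G.mul_mem (G.inv_mem hh₂) hg) hh₁, ?_, ?_⟩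
  · rw [Perm.mul_apply, Perm.mul_apply, hp₁, hgv, ← hp₂]
    simp
  · simp [hgq]

theorem exists_sym2_map_eq_of_mem_diff [Finite V] {v : V} (hcubic : (Γ.neighborSet v).ncard = 3)
    (hAut : ∀ g ∈ G, ∀ u w : V, Γ.Adj (g u) (g w) ↔ Γ.Adj u w)
    (hTrans : ∀ u w : V, ∃ g ∈ G, g u = w) (hloc : (inducedNbhd Γ G v).ncard = 2)
    {e₁ e₂ : Sym2 V} (he₁ : e₁ ∈ Γ.edgeSet \ matchingEdges Γ G)
    (he₂ : e₂ ∈ Γ.edgeSet \ matchingEdges Γ G) : ∃ g ∈ G, Sym2.map g e₁ = e₂ := by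
  induction e₁ using Sym2.ind with | _ p₁ q₁ =>
  induction e₂ using Sym2.ind with | _ p₂ q₂ =>
  obtain ⟨g, hg, hp, hq⟩ := hm.exists_apply_eq_apply_eq hcubic hAut hTrans hloc
    (hm.mk_mem_edgeSet_diff_iff.1 he₁) (hm.mk_mem_edgeSet_diff_iff.1 he₂)
  exact ⟨g, hg, by rw [Sym2.map_mk, hp, hq]⟩

theorem deleteEdges_adj_iff {u w : V} :
    (Γ.deleteEdges (matchingEdges Γ G)).Adj u w ↔ Γ.Adj u w ∧ w ≠ m u := by
  rw [SimpleGraph.deleteEdges_adj, hm.mk_mem_matchingEdges_iff]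

theorem ncard_neighborSet_deleteEdges (u : V) :
    ((Γ.deleteEdges (matchingEdges Γ G)).neighborSet u).ncard = (Γ.neighborSet u).ncard - 1 := by
  have hN : (Γ.deleteEdges (matchingEdges Γ G)).neighborSet u = Γ.neighborSet u \ {m u} := by
    ext w
    exact hm.deleteEdges_adj_iff
  rw [hN, Set.ncard_sdiff_singleton_of_mem (s := Γ.neighborSet u) (hm.adj u)]

theorem deleteEdges_adj_apply_iff (hAut : ∀ g ∈ G, ∀ u w : V, Γ.Adj (g u) (g w) ↔ Γ.Adj u w)
    (g : Perm V) (hg : g ∈ G) (u w : V) :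
    (Γ.deleteEdges (matchingEdges Γ G)).Adj (g u) (g w) ↔
      (Γ.deleteEdges (matchingEdges Γ G)).Adj u w := by
  rw [hm.deleteEdges_adj_iff, hm.deleteEdges_adj_iff, hAut g hg, ← hm.apply_mate hAut hg,
    g.injective.ne_iff]

end IsMateMap

theorem ncard_supp_connectedComponentMk_eq {H : SimpleGraph V} {G : Subgroup (Perm V)}
    (hAut : ∀ g ∈ G, ∀ u w : V, H.Adj (g u) (g w) ↔ H.Adj u w)
    (hTrans : ∀ u w : V, ∃ g ∈ G, g u = w) (u w : V) :
    (H.connectedComponentMk u).supp.ncard = (H.connectedComponentMk w).supp.ncard := by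
  obtain ⟨g, hg, rfl⟩ := hTrans u w
  let φ : H ≃g H := ⟨g, hAut g hg _ _⟩
  exact Nat.card_congr (ConnectedComponent.isoEquivSupp φ (H.connectedComponentMk u))

theorem stmt7_general {V : Type} [Fintype V] (Γ : SimpleGraph V)
    (hcubic : ∀ w : V, (Γ.neighborSet w).ncard = 3)
    (G : Subgroup (Equiv.Perm V))
    (hAut : ∀ g ∈ G, ∀ u w : V, Γ.Adj (g u) (g w) ↔ Γ.Adj u w)
    (hTrans : ∀ u w : V, ∃ g ∈ G, g u = w)
    (v : V)
    (hloc : Nat.card ↥(inducedNbhd Γ G v) = 2) :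
    -- (i) unique neighbour with equal stabiliser
    (∀ u : V, ∃! u' : V, Γ.Adj u u' ∧
        ∀ g ∈ G, ((g : Equiv.Perm V) u = u ↔ (g : Equiv.Perm V) u' = u')) ∧
    -- (ii) T is a perfect matching and a single G-orbit; G has exactly two edge-orbits
    (matchingEdges Γ G ⊆ Γ.edgeSet ∧
      (∀ w : V, ∃! e, e ∈ matchingEdges Γ G ∧ w ∈ e) ∧
      (matchingEdges Γ G).Nonempty ∧
      (∀ g ∈ G, ∀ e ∈ matchingEdges Γ G,
        Sym2.map (g : Equiv.Perm V) e ∈ matchingEdges Γ G) ∧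
      (∀ e₁ ∈ matchingEdges Γ G, ∀ e₂ ∈ matchingEdges Γ G,
        ∃ g ∈ G, Sym2.map (g : Equiv.Perm V) e₁ = e₂) ∧
      (Γ.edgeSet \ matchingEdges Γ G).Nonempty ∧
      (∀ e₁ ∈ Γ.edgeSet \ matchingEdges Γ G, ∀ e₂ ∈ Γ.edgeSet \ matchingEdges Γ G,
        ∃ g ∈ G, Sym2.map (g : Equiv.Perm V) e₁ = e₂)) ∧
    -- (iii) Γ − T is a disjoint union of cycles, all of the same length
    ((∀ w : V, ((Γ.deleteEdges (matchingEdges Γ G)).neighborSet w).ncard = 2) ∧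
      ∃ k : ℕ, ∀ w : V,
        (((Γ.deleteEdges (matchingEdges Γ G)).connectedComponentMk w).supp).ncard = k) := by
  rw [Nat.card_coe_set_eq] at hloc
  choose m hmate using existsUnique_adj_sameStab (hcubic v) hAut hTrans hloc
  have hm : IsMateMap Γ G m := fun u w => ⟨(hmate u).2 w, fun h => h ▸ (hmate u).1⟩
  refine ⟨fun u => ⟨m u, hmate u⟩, ⟨matchingEdges_subset_edgeSet, ?_, ?_, ?_, ?_, ?_, ?_⟩, ?_, ?_⟩
  · exact hm.existsUnique_mem_matchingEdges
  · exact ⟨s(v, m v), hm.mk_mem_matchingEdges_iff.2 rfl⟩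
  · exact fun g hg e he => hm.sym2_map_mem_matchingEdges hAut hg he
  · exact fun e₁ h₁ e₂ h₂ => hm.exists_sym2_map_eq_of_mem_matchingEdges hAut hTrans h₁ h₂
  · exact hm.diff_matchingEdges_nonempty (v := v) (by rw [hcubic]; norm_num)
  · exact fun e₁ h₁ e₂ h₂ => hm.exists_sym2_map_eq_of_mem_diff (hcubic v) hAut hTrans hloc h₁ h₂
  · exact fun w => by rw [hm.ncard_neighborSet_deleteEdges, hcubic]
  · exact ⟨_, fun w =>
      ncard_supp_connectedComponentMk_eq (hm.deleteEdges_adj_apply_iff hAut) hTrans w v⟩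

theorem stmt7 {V : Type} [Fintype V] (Γ : SimpleGraph V)
    (hconn : Γ.Connected)
    (hcubic : ∀ w : V, (Γ.neighborSet w).ncard = 3)
    (G : Subgroup (Equiv.Perm V))
    (hAut : ∀ g ∈ G, ∀ u w : V, Γ.Adj (g u) (g w) ↔ Γ.Adj u w)
    (hTrans : ∀ u w : V, ∃ g ∈ G, g u = w)
    (v : V)
    (hloc : Nat.card ↥(inducedNbhd Γ G v) = 2) :
    -- (i) unique neighbour with equal stabiliser
    (∀ u : V, ∃! u' : V, Γ.Adj u u' ∧
        ∀ g ∈ G, ((g : Equiv.Perm V) u = u ↔ (g : Equiv.Perm V) u' = u')) ∧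
    -- (ii) T is a perfect matching and a single G-orbit; G has exactly two edge-orbits
    (matchingEdges Γ G ⊆ Γ.edgeSet ∧
      (∀ w : V, ∃! e, e ∈ matchingEdges Γ G ∧ w ∈ e) ∧
      (matchingEdges Γ G).Nonempty ∧
      (∀ g ∈ G, ∀ e ∈ matchingEdges Γ G,
        Sym2.map (g : Equiv.Perm V) e ∈ matchingEdges Γ G) ∧
      (∀ e₁ ∈ matchingEdges Γ G, ∀ e₂ ∈ matchingEdges Γ G,
        ∃ g ∈ G, Sym2.map (g : Equiv.Perm V) e₁ = e₂) ∧
      (Γ.edgeSet \ matchingEdges Γ G).Nonempty ∧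
      (∀ e₁ ∈ Γ.edgeSet \ matchingEdges Γ G, ∀ e₂ ∈ Γ.edgeSet \ matchingEdges Γ G,
        ∃ g ∈ G, Sym2.map (g : Equiv.Perm V) e₁ = e₂)) ∧
    -- (iii) Γ − T is a disjoint union of cycles, all of the same length
    ((∀ w : V, ((Γ.deleteEdges (matchingEdges Γ G)).neighborSet w).ncard = 2) ∧
      ∃ k : ℕ, ∀ w : V,
        (((Γ.deleteEdges (matchingEdges Γ G)).connectedComponentMk w).supp).ncard = k) :=
  stmt7_general Γ hcubic G hAut hTrans v hloc

end Stmt7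
end

section
/- Let Γ be a finite connected cubic G-vertex-transitive graph such that for a vertex v the induced permutation group G_v^{Γ(v)} has order 2, let v' be the unique neighbour of v with G_v = G_{v'}, and let T be the G-orbit of the edge {v,v'} (a perfect matching of Γ). If G has an abelian normal subgroup N with N_v ≠ 1, then every cycle of the graph obtained from Γ by deleting the edges of T has length exactly 4. -/
/-!
The stabiliser `G_v` fixes `v'` and, acting nontrivially on the three neighbours of `v`, cannot
fix a third one; hence every element of `G` mapping `v` to `v'` maps `v'` back to `v`. So the
edges of `T` at a vertex `x` are fixed by `G_x`, and `Γ - T` has maximal degree two.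
As `N ⊴ G`, `N_v ≠ 1` and `Γ` is connected and `G`-vertex-transitive, every `N_x` moves a
neighbour of `x`, and therefore swaps the two neighbours of `x` in `Γ - T`.
On a cycle `w, p₁, p₂, …, p_{m-1}` of `Γ - T` take `ν₀ ∈ N_w` with `ν₀ p₁ = p_{m-1}` and
`ν₁ ∈ N_{p₁}` with `ν₁ w = p₂`. Since `N` is abelian, `ν₀` fixes `p₂ = ν₁ w`, so `p₂` is adjacent
to `ν₀ p₁ = p_{m-1}`; this forces `p₂ = p_{m-2}`, that is `m = 4`.
-/

namespace Stmt8

/-- The permutation group induced by the stabiliser `G_v` on the neighbourhood `Γ(v)`,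
encoded as the set of restrictions to `Γ(v)` of elements of `G` fixing `v`. -/
def inducedNbhd {V : Type} (Γ : SimpleGraph V) (G : Subgroup (Equiv.Perm V)) (v : V) :
    Set (Γ.neighborSet v → V) :=
  {f | ∃ g ∈ G, (g : Equiv.Perm V) v = v ∧ ∀ u : Γ.neighborSet v, f u = g u.1}

open SimpleGraph

def MaxDegreeLeTwo {V : Type*} (Δ : SimpleGraph V) : Prop :=
  ∀ ⦃x α β c : V⦄, Δ.Adj x α → Δ.Adj x β → α ≠ β → Δ.Adj x c → c = α ∨ c = β

theorem _root_.Set.eq_or_eq_or_eq_of_ncard_eq_three {α : Type*} {s : Set α} (hs : s.ncard = 3)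
    {a b c x : α} (ha : a ∈ s) (hb : b ∈ s) (hc : c ∈ s) (hab : a ≠ b) (hac : a ≠ c)
    (hbc : b ≠ c) (hx : x ∈ s) : x = a ∨ x = b ∨ x = c := by
  have hsub : ({a, b, c} : Set α) ⊆ s := by simp [Set.insert_subset_iff, ha, hb, hc]
  have hcard : ({a, b, c} : Set α).ncard = 3 := Set.ncard_eq_three.mpr ⟨a, b, c, hab, hac, hbc, rfl⟩
  have heq : ({a, b, c} : Set α) = s :=
    Set.eq_of_subset_of_ncard_le hsub (by rw [hs, hcard]) (Set.finite_of_ncard_ne_zero (by omega))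
  simpa [← heq] using hx

theorem _root_.SimpleGraph.Walk.IsCycle.length_eq_four_of_commuting_transitive_stabilizers
    {V : Type*} {Δ : SimpleGraph V} (H : Set (Equiv.Perm V))
    (hH_adj : ∀ ν ∈ H, ∀ a b, Δ.Adj a b → Δ.Adj (ν a) (ν b))
    (hH_comm : ∀ a ∈ H, ∀ b ∈ H, a * b = b * a)
    (hdeg : MaxDegreeLeTwo Δ)
    (htrans : ∀ x α β, Δ.Adj x α → Δ.Adj x β → α ≠ β → ∃ ν ∈ H, ν x = x ∧ ν α = β)
    {w : V} {p : Δ.Walk w w} (hp : p.IsCycle) : p.length = 4 := by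
  have h3 := hp.three_le_length
  have hw_p1 : Δ.Adj w (p.getVert 1) := by simpa using p.adj_getVert_succ (i := 0) (by omega)
  have hp1_p2 : Δ.Adj (p.getVert 1) (p.getVert 2) := p.adj_getVert_succ (by omega)
  have hq2_q1 : Δ.Adj (p.getVert (p.length - 2)) (p.getVert (p.length - 1)) := by
    simpa [show p.length - 2 + 1 = p.length - 1 by omega] using
      p.adj_getVert_succ (i := p.length - 2) (by omega)
  have hq1_w : Δ.Adj (p.getVert (p.length - 1)) w := by
    simpa [show p.length - 1 + 1 = p.length by omega] using
      p.adj_getVert_succ (i := p.length - 1) (by omega)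
  have hp1_ne_q1 : p.getVert 1 ≠ p.getVert (p.length - 1) := hp.snd_ne_penultimate
  have hw_ne_p2 : w ≠ p.getVert 2 := by
    simpa using hp.getVert_sub_one_ne_getVert_add_one (i := 1) (by omega)
  have hq2_ne_w : p.getVert (p.length - 2) ≠ w := by
    simpa [show p.length - 1 - 1 = p.length - 2 by omega,
      show p.length - 1 + 1 = p.length by omega] using
      hp.getVert_sub_one_ne_getVert_add_one (i := p.length - 1) (by omega)
  obtain ⟨ν₀, hν₀, hν₀w, hν₀p1⟩ := htrans _ _ _ hw_p1 hq1_w.symm hp1_ne_q1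
  obtain ⟨ν₁, hν₁, -, hν₁w⟩ := htrans _ _ _ hw_p1.symm hp1_p2 hw_ne_p2
  have hν₀p2 : ν₀ (p.getVert 2) = p.getVert 2 := by
    rw [← hν₁w, ← Equiv.Perm.mul_apply, hH_comm _ hν₀ _ hν₁, Equiv.Perm.mul_apply, hν₀w]
  have hq1_p2 : Δ.Adj (p.getVert (p.length - 1)) (p.getVert 2) := by
    simpa [hν₀p1, hν₀p2] using hH_adj ν₀ hν₀ _ _ hp1_p2
  obtain h | h := hdeg hq2_q1.symm hq1_w hq2_ne_w hq1_p2
  · have := hp.getVert_injOn (by simp only [Set.mem_ofPred_eq]; omega)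
      (by simp only [Set.mem_ofPred_eq]; omega) h
    omega
  · exact absurd h.symm hw_ne_p2

theorem _root_.Equiv.Perm.apply_eq_of_apply_ne_of_adj {V : Type*} {Δ : SimpleGraph V}
    (hdeg : MaxDegreeLeTwo Δ)
    {ν : Equiv.Perm V} (hν : ∀ a b, Δ.Adj a b → Δ.Adj (ν a) (ν b)) {x z α β : V}
    (hνx : ν x = x) (hz : Δ.Adj x z) (hνz : ν z ≠ z) (hα : Δ.Adj x α) (hβ : Δ.Adj x β)
    (hαβ : α ≠ β) : ν α = β := by
  have hmaps : ∀ c, Δ.Adj x c → ν c = α ∨ ν c = β := fun c hc =>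
    hdeg hα hβ hαβ (hνx ▸ hν x c hc)
  rcases hdeg hα hβ hαβ hz with rfl | rfl
  · exact (hmaps z hz).resolve_left hνz
  · have hνβ : ν z = α := (hmaps z hz).resolve_right hνz
    exact (hmaps α hα).resolve_left fun h => hαβ (ν.injective (h.trans hνβ.symm))

theorem maxDegreeLeTwo_deleteEdges {V : Type*} {Γ : SimpleGraph V}
    (hcubic : ∀ w : V, (Γ.neighborSet w).ncard = 3) {T : Set (Sym2 V)}
    (hT : ∀ x, ∃ x', Γ.Adj x x' ∧ s(x, x') ∈ T) : MaxDegreeLeTwo (Γ.deleteEdges T) := by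
  intro x α β c hα hβ hαβ hc
  rw [deleteEdges_adj] at hα hβ hc
  obtain ⟨x', hxx', hx'T⟩ := hT x
  have hαx' : α ≠ x' := by rintro rfl; exact hα.2 hx'T
  have hβx' : β ≠ x' := by rintro rfl; exact hβ.2 hx'T
  rcases Set.eq_or_eq_or_eq_of_ncard_eq_three (hcubic x) hα.1 hβ.1 hxx' hαβ hαx' hβx' hc.1
    with h | h | rfl
  · exact .inl h
  · exact .inr h
  · exact absurd hx'T hc.2

theorem exists_stabilizer_moves_adj_of_one_lt_card {V : Type} {Γ : SimpleGraph V}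
    {G : Subgroup (Equiv.Perm V)} {v : V}
    (hcard : 1 < Nat.card (inducedNbhd Γ G v)) :
    ∃ g ∈ G, g v = v ∧ ∃ u, Γ.Adj v u ∧ g u ≠ u := by
  by_contra! hfix
  have hsub : inducedNbhd Γ G v ⊆ {fun u => u.1} := by
    rintro f ⟨g, hg, hgv, hf⟩
    exact funext fun u => (hf u).trans (hfix g hg hgv u u.2)
  have := Set.ncard_le_ncard hsub (Set.finite_singleton _)
  rw [Set.ncard_singleton, ← Nat.card_coe_set_eq] at this
  omega

section PermGroup

variable {V : Type*} {Γ : SimpleGraph V} {G : Subgroup (Equiv.Perm V)}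

def edgeOrbit (G : Subgroup (Equiv.Perm V)) (e : Sym2 V) : Set (Sym2 V) :=
  {e' | ∃ g ∈ G, e' = Sym2.map g e}

theorem map_mem_edgeOrbit {g : Equiv.Perm V} (hg : g ∈ G) {e e' : Sym2 V}
    (he' : e' ∈ edgeOrbit G e) : Sym2.map g e' ∈ edgeOrbit G e := by
  obtain ⟨k, hk, rfl⟩ := he'
  exact ⟨g * k, mul_mem hg hk, by rw [Sym2.map_map]; rfl⟩

theorem deleteEdges_edgeOrbit_adj_apply (hAut : ∀ g ∈ G, ∀ u w : V, Γ.Adj (g u) (g w) ↔ Γ.Adj u w)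
    {g : Equiv.Perm V} (hg : g ∈ G) {e : Sym2 V} {a b : V}
    (hab : (Γ.deleteEdges (edgeOrbit G e)).Adj a b) :
    (Γ.deleteEdges (edgeOrbit G e)).Adj (g a) (g b) := by
  rw [deleteEdges_adj] at hab ⊢
  refine ⟨(hAut g hg a b).2 hab.1, fun hT => hab.2 ?_⟩
  simpa using map_mem_edgeOrbit (inv_mem hg) hT

theorem exists_adj_mem_edgeOrbit (hAut : ∀ g ∈ G, ∀ u w : V, Γ.Adj (g u) (g w) ↔ Γ.Adj u w)
    (hTrans : ∀ u w : V, ∃ g ∈ G, g u = w) {v v' : V} (hadj : Γ.Adj v v') (x : V) :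
    ∃ x', Γ.Adj x x' ∧ s(x, x') ∈ edgeOrbit G s(v, v') := by
  obtain ⟨k, hk, rfl⟩ := hTrans v x
  exact ⟨k v', (hAut k hk v v').2 hadj, k, hk, by rw [Sym2.map_mk]⟩

section StabilizerEq

variable {v v' : V} (hstab : ∀ g ∈ G, ((g : Equiv.Perm V) v = v ↔ (g : Equiv.Perm V) v' = v'))
include hstab

theorem apply_right_eq_left (hAut : ∀ g ∈ G, ∀ u w : V, Γ.Adj (g u) (g w) ↔ Γ.Adj u w)
    (hcubic : (Γ.neighborSet v).ncard = 3) (hadj : Γ.Adj v v')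
    (hmove : ∃ g ∈ G, g v = v ∧ ∃ u, Γ.Adj v u ∧ g u ≠ u)
    {h : Equiv.Perm V} (hh : h ∈ G) (hhv : h v = v') : h v' = v := by
  obtain ⟨g, hg, hgv, u, hu, hgu⟩ := hmove
  have hgv' : g v' = v' := (hstab g hg).1 hgv
  -- `h G_v h⁻¹ = G_{v'} = G_v`, so `G_v` also fixes `h⁻¹ v`.
  have hgy : g (h⁻¹ v) = h⁻¹ v := by
    have hconj : (h * g * h⁻¹) v = v :=
      (hstab _ (mul_mem (mul_mem hh hg) (inv_mem hh))).2 (by simp [← hhv, hgv])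
    rw [Equiv.Perm.mul_apply, Equiv.Perm.mul_apply] at hconj
    exact Equiv.Perm.eq_inv_iff_eq.2 hconj
  by_contra hne
  have hyv' : v' ≠ h⁻¹ v := fun h' => hne (by rw [h']; exact h.apply_symm_apply v)
  have hy : Γ.Adj v (h⁻¹ v) := by
    simpa [← hhv] using ((hAut h⁻¹ (inv_mem hh) v v').2 hadj).symm
  have huv' : v' ≠ u := by rintro rfl; exact hgu hgv'
  have huy : h⁻¹ v ≠ u := by rintro rfl; exact hgu hgy
  have hgu_adj : Γ.Adj v (g u) := by simpa [hgv] using (hAut g hg v u).2 hu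
  rcases Set.eq_or_eq_or_eq_of_ncard_eq_three hcubic hadj hy hu hyv' huv' huy hgu_adj
    with h' | h' | h'
  · exact huv' (g.injective (h'.trans hgv'.symm)).symm
  · exact huy (g.injective (h'.trans hgy.symm)).symm
  · exact hgu h'

theorem apply_eq_self_of_mem_edgeOrbit {h : Equiv.Perm V} (hh : h ∈ G) (hhv : h v = v')
    (hhv' : h v' = v) {g : Equiv.Perm V} (hg : g ∈ G) {x z : V} (hgx : g x = x)
    (hxz : s(x, z) ∈ edgeOrbit G s(v, v')) : g z = z := by
  obtain ⟨k, hk, hkv, hkv'⟩ : ∃ k ∈ G, k v = x ∧ k v' = z := by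
    obtain ⟨k, hk, he⟩ := hxz
    rw [Sym2.map_mk, Sym2.eq_iff] at he
    rcases he with ⟨hx, hz⟩ | ⟨hx, hz⟩
    · exact ⟨k, hk, hx.symm, hz.symm⟩
    · exact ⟨k * h, mul_mem hk hh, by simp [hhv, hx], by simp [hhv', hz]⟩
  have hconj : (k⁻¹ * g * k) v' = v' :=
    (hstab _ (mul_mem (mul_mem (inv_mem hk) hg) hk)).1 (by
      rw [Equiv.Perm.mul_apply, Equiv.Perm.mul_apply, hkv, hgx]
      exact Equiv.Perm.inv_eq_iff_eq.2 hkv.symm)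
  rw [Equiv.Perm.mul_apply, Equiv.Perm.mul_apply, hkv'] at hconj
  exact (Equiv.Perm.inv_eq_iff_eq.1 hconj).trans hkv'

end StabilizerEq

theorem exists_stabilizer_moves_adj_of_normal (hconn : Γ.Connected)
    (hAut : ∀ g ∈ G, ∀ u w : V, Γ.Adj (g u) (g w) ↔ Γ.Adj u w)
    (hTrans : ∀ u w : V, ∃ g ∈ G, g u = w) {N : Subgroup (Equiv.Perm V)}
    (hNnormal : ∀ g ∈ G, ∀ n ∈ N, g * n * g⁻¹ ∈ N) {v : V}
    (hNv : ∃ n ∈ N, (n : Equiv.Perm V) v = v ∧ n ≠ 1) (x : V) :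
    ∃ ν ∈ N, ν x = x ∧ ∃ z, Γ.Adj x z ∧ ν z ≠ z := by
  obtain ⟨n, hn, hnv, hn1⟩ := hNv
  obtain ⟨b, hb⟩ : ∃ b, n b ≠ b := by
    by_contra! h
    exact hn1 (Equiv.ext h)
  obtain ⟨d, -, hd₁, hd₂⟩ :=
    (hconn.preconnected v b).some.exists_boundary_dart {y | n y = y} hnv hb
  obtain ⟨k, hk, rfl⟩ := hTrans d.fst x
  refine ⟨k * n * k⁻¹, hNnormal k hk n hn, by simpa using hd₁, k d.snd,
    (hAut k hk _ _).2 d.adj, ?_⟩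
  simpa using hd₂

end PermGroup

theorem stmt8_general {V : Type} (Γ : SimpleGraph V)
    (hconn : Γ.Connected)
    (hcubic : ∀ w : V, (Γ.neighborSet w).ncard = 3)
    (G : Subgroup (Equiv.Perm V))
    (hAut : ∀ g ∈ G, ∀ u w : V, Γ.Adj (g u) (g w) ↔ Γ.Adj u w)
    (hTrans : ∀ u w : V, ∃ g ∈ G, g u = w)
    (v v' : V)
    (hloc : Nat.card ↥(inducedNbhd Γ G v) = 2)
    (hadj : Γ.Adj v v')
    (hstab : ∀ g ∈ G, ((g : Equiv.Perm V) v = v ↔ (g : Equiv.Perm V) v' = v'))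
    (N : Subgroup (Equiv.Perm V)) (hNG : N ≤ G)
    (hNnormal : ∀ g ∈ G, ∀ n ∈ N, g * n * g⁻¹ ∈ N)
    (hNab : ∀ a ∈ N, ∀ b ∈ N, a * b = b * a)
    (hNv : ∃ n ∈ N, (n : Equiv.Perm V) v = v ∧ n ≠ 1) :
    ∀ (w : V)
      (p : (Γ.deleteEdges
        {e : Sym2 V | ∃ g ∈ G, e = Sym2.map (g : Equiv.Perm V) s(v, v')}).Walk w w),
      p.IsCycle → p.length = 4 := by
  obtain ⟨h, hh, hhv⟩ := hTrans v v'
  have hhv' : h v' = v := apply_right_eq_left hstab hAut (hcubic v) hadj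
    (exists_stabilizer_moves_adj_of_one_lt_card (hloc ▸ one_lt_two)) hh hhv
  have hdeg : MaxDegreeLeTwo (Γ.deleteEdges (edgeOrbit G s(v, v'))) :=
    maxDegreeLeTwo_deleteEdges hcubic (exists_adj_mem_edgeOrbit hAut hTrans hadj)
  intro w p hp
  refine hp.length_eq_four_of_commuting_transitive_stabilizers N
    (fun ν hν _ _ => deleteEdges_edgeOrbit_adj_apply hAut (hNG hν)) hNab hdeg ?_
  intro x α β hα hβ hαβ
  obtain ⟨ν, hν, hνx, z, hxz, hνz⟩ :=
    exists_stabilizer_moves_adj_of_normal hconn hAut hTrans hNnormal hNv x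
  have hz : (Γ.deleteEdges (edgeOrbit G s(v, v'))).Adj x z :=
    deleteEdges_adj.2 ⟨hxz, fun hT => hνz (apply_eq_self_of_mem_edgeOrbit hstab hh hhv hhv'
      (hNG hν) hνx hT)⟩
  exact ⟨ν, hν, hνx, Equiv.Perm.apply_eq_of_apply_ne_of_adj hdeg
    (fun _ _ => deleteEdges_edgeOrbit_adj_apply hAut (hNG hν)) hνx hz hνz hα hβ hαβ⟩

theorem stmt8 {V : Type} [Fintype V] (Γ : SimpleGraph V)
    (hconn : Γ.Connected)
    (hcubic : ∀ w : V, (Γ.neighborSet w).ncard = 3)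
    (G : Subgroup (Equiv.Perm V))
    (hAut : ∀ g ∈ G, ∀ u w : V, Γ.Adj (g u) (g w) ↔ Γ.Adj u w)
    (hTrans : ∀ u w : V, ∃ g ∈ G, g u = w)
    (v v' : V)
    (hloc : Nat.card ↥(inducedNbhd Γ G v) = 2)
    (hadj : Γ.Adj v v')
    (hstab : ∀ g ∈ G, ((g : Equiv.Perm V) v = v ↔ (g : Equiv.Perm V) v' = v'))
    (N : Subgroup (Equiv.Perm V)) (hNG : N ≤ G)
    (hNnormal : ∀ g ∈ G, ∀ n ∈ N, g * n * g⁻¹ ∈ N)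
    (hNab : ∀ a ∈ N, ∀ b ∈ N, a * b = b * a)
    (hNv : ∃ n ∈ N, (n : Equiv.Perm V) v = v ∧ n ≠ 1) :
    ∀ (w : V)
      (p : (Γ.deleteEdges
        {e : Sym2 V | ∃ g ∈ G, e = Sym2.map (g : Equiv.Perm V) s(v, v')}).Walk w w),
      p.IsCycle → p.length = 4 :=
  stmt8_general Γ hconn hcubic G hAut hTrans v v' hloc hadj hstab N hNG hNnormal hNab hNv

end Stmt8
end

section
/- Let n ≥ 3 be an integer with n ≠ 4, let Γ be the circular ladder graph, i.e. the Cartesian product of a cycle of length n with the complete graph K_2, and let G be a vertex-transitive group of automorphisms of Γ. Then every abelian normal subgroup of G is semiregular on the vertices of Γ. -/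
/- STATEMENT 9:
Let n ≥ 3, n ≠ 4, let Γ be the circular ladder graph (the Cartesian product of a cycle
of length n with K₂), and let G be a vertex-transitive group of automorphisms of Γ.
Then every abelian normal subgroup of G is semiregular on the vertices of Γ. -/

namespace Stmt9

open SimpleGraph

/-- The circular ladder graph: the box (Cartesian) product of the cycle of length `n`
with the complete graph on two vertices. -/
def circularLadder (n : ℕ) : SimpleGraph (Fin n × Fin 2) :=
  cycleGraph n □ completeGraph (Fin 2)

/-- A set of permutations is semiregular if only the identity fixes a point. -/
def Semiregular {V : Type} (N : Subgroup (Equiv.Perm V)) : Prop :=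
  ∀ n ∈ N, ∀ v : V, n v = v → n = 1

/-! The rungs of the ladder are the edges lying on two 4-cycles that leave an endpoint through
different neighbours; for `n ≠ 4` no cycle edge has this property. Hence every automorphism
preserves the rungs and the two cycles, and so acts as `(a, b) ↦ (c ± a, b + t)`. A nontrivial
automorphism fixing `(i, j)` is then the reflection `(a, b) ↦ (2i - a, b)`. If an abelian normal
subgroup `N` contained it, conjugating by an element of `G` mapping `(i, j)` to `(i + 1, j)` would
put the reflection about `i + 1` into `N` as well, and the two reflections commute only if
`4 = 0` in `ℤ/n`. -/

open Fin.CommRing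

section Squares

variable {V W : Type*} {G : SimpleGraph V} {H : SimpleGraph W}

/-- `u w x v` is a 4-cycle through the edge `u v`. -/
def SquareThrough (G : SimpleGraph V) (u v w x : V) : Prop :=
  G.Adj u w ∧ G.Adj w x ∧ G.Adj x v ∧ w ≠ v ∧ x ≠ u

lemma SquareThrough.symm {u v w x : V} (h : SquareThrough G u v w x) :
    SquareThrough G v u x w :=
  ⟨h.2.2.1.symm, h.2.1.symm, h.1.symm, h.2.2.2.2, h.2.2.2.1⟩

lemma SquareThrough.map (f : G ↪g H) {u v w x : V} (h : SquareThrough G u v w x) :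
    SquareThrough H (f u) (f v) (f w) (f x) :=
  ⟨f.map_adj_iff.mpr h.1, f.map_adj_iff.mpr h.2.1, f.map_adj_iff.mpr h.2.2.1,
    f.injective.ne h.2.2.2.1, f.injective.ne h.2.2.2.2⟩

/-- In the circular ladder of length `n ≠ 4` these edges are exactly the rungs. -/
def LiesOnTwoSquares (G : SimpleGraph V) (u v : V) : Prop :=
  G.Adj u v ∧ ∃ w x w' x', SquareThrough G u v w x ∧ SquareThrough G u v w' x' ∧ w ≠ w'

lemma LiesOnTwoSquares.map (f : G ↪g H) {u v : V} (h : LiesOnTwoSquares G u v) :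
    LiesOnTwoSquares H (f u) (f v) := by
  obtain ⟨huv, w, x, w', x', hsq, hsq', hww'⟩ := h
  exact ⟨f.map_adj_iff.mpr huv, f w, f x, f w', f x', hsq.map f, hsq'.map f,
    f.injective.ne hww'⟩

lemma Iso.liesOnTwoSquares_iff (φ : G ≃g H) {u v : V} :
    LiesOnTwoSquares H (φ u) (φ v) ↔ LiesOnTwoSquares G u v := by
  refine ⟨fun h => ?_, LiesOnTwoSquares.map φ.toEmbedding⟩
  simpa using h.map φ.symm.toEmbedding

end Squares

lemma Fin.induction_add_one {n : ℕ} [NeZero n] {p : Fin n → Prop} (zero : p 0)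
    (add_one : ∀ a, p a → p (a + 1)) (a : Fin n) : p a := by
  have hcast : ∀ m : ℕ, p m := by
    intro m
    induction m with
    | zero => simpa using zero
    | succ m ih => simpa using add_one _ ih
  simpa using hcast a.val

section Ladder

variable {k : ℕ}

lemma two_ne_zero_fin_add_three : (2 : Fin (k + 3)) ≠ 0 := by
  simp [Fin.ext_iff, Nat.mod_eq_of_lt]

lemma four_ne_zero_fin_add_three (hk : k + 3 ≠ 4) : (4 : Fin (k + 3)) ≠ 0 := by
  rcases k with _ | _ | k
  · decide
  · simp at hk
  · simp [Fin.ext_iff, Nat.mod_eq_of_lt]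

lemma circularLadder_adj_iff {u v : Fin (k + 3) × Fin 2} :
    (circularLadder (k + 3)).Adj u v ↔
      (u.2 = v.2 ∧ (cycleGraph (k + 3)).Adj u.1 v.1) ∨ (u.1 = v.1 ∧ u.2 ≠ v.2) := by
  simp [circularLadder, boxProd_adj, and_comm]

lemma fin_two_add_one_ne (b : Fin 2) : b + 1 ≠ b := by
  revert b; decide

lemma fin_two_eq_add_one_of_ne {b c : Fin 2} (h : c ≠ b) : c = b + 1 := by
  revert b c; decide

lemma circularLadder_adj_rung (a : Fin (k + 3)) (b : Fin 2) :
    (circularLadder (k + 3)).Adj (a, b) (a, b + 1) :=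
  circularLadder_adj_iff.mpr (.inr ⟨rfl, (fin_two_add_one_ne b).symm⟩)

lemma circularLadder_adj_add_one (a : Fin (k + 3)) (b : Fin 2) :
    (circularLadder (k + 3)).Adj (a, b) (a + 1, b) :=
  circularLadder_adj_iff.mpr (.inl ⟨rfl, cycleGraph_adj.mpr (.inr (add_sub_cancel_left a 1))⟩)

lemma circularLadder_adj_sub_one (a : Fin (k + 3)) (b : Fin 2) :
    (circularLadder (k + 3)).Adj (a, b) (a - 1, b) :=
  circularLadder_adj_iff.mpr (.inl ⟨rfl, cycleGraph_adj.mpr (.inl (sub_sub_cancel a 1))⟩)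

lemma circularLadder_adj_cases {a : Fin (k + 3)} {b : Fin 2} {w : Fin (k + 3) × Fin 2}
    (h : (circularLadder (k + 3)).Adj (a, b) w) :
    w = (a + 1, b) ∨ w = (a - 1, b) ∨ w = (a, b + 1) := by
  obtain ⟨hb, ha | ha⟩ | ⟨ha, hb⟩ := circularLadder_adj_iff.mp h
  · exact .inr (.inl (Prod.ext (by linear_combination -ha) hb.symm))
  · exact .inl (Prod.ext (by linear_combination ha) hb.symm)
  · exact .inr (.inr (Prod.ext ha.symm (fin_two_eq_add_one_of_ne (Ne.symm hb))))

lemma circularLadder_squareThrough_add_one (hk : k + 3 ≠ 4) {a : Fin (k + 3)} {b : Fin 2}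
    {w x : Fin (k + 3) × Fin 2}
    (h : SquareThrough (circularLadder (k + 3)) (a, b) (a + 1, b) w x) :
    w = (a, b + 1) ∧ x = (a + 1, b + 1) := by
  obtain ⟨huw, hwx, hxv, hwv, hxu⟩ := h
  -- Any other choice of the neighbours `w` and `x` would force `2 = 0` or `4 = 0`.
  have h2 := two_ne_zero_fin_add_three (k := k)
  have h4 := four_ne_zero_fin_add_three hk
  rcases circularLadder_adj_cases huw with rfl | rfl | rfl <;>
    rcases circularLadder_adj_cases hxv.symm with rfl | rfl | rfl
  all_goals first
    | exact ⟨rfl, rfl⟩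
    | exact absurd rfl hwv
    | (simp at hxu; done)
    | exfalso
      obtain ⟨hb, ha | ha⟩ | ⟨ha, hb⟩ := circularLadder_adj_iff.mp hwx <;>
        dsimp only at ha hb
      all_goals first
        | exact fin_two_add_one_ne _ hb
        | exact fin_two_add_one_ne _ hb.symm
        | exact hb rfl
        | (apply h2; linear_combination ha)
        | (apply h2; linear_combination -ha)
        | (apply h4; linear_combination ha)
        | (apply h4; linear_combination -ha)

lemma liesOnTwoSquares_circularLadder_rung (a : Fin (k + 3)) (b : Fin 2) :
    LiesOnTwoSquares (circularLadder (k + 3)) (a, b) (a, b + 1) := by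
  have hb : b ≠ b + 1 := (fin_two_add_one_ne b).symm
  refine ⟨circularLadder_adj_rung a b, (a + 1, b), (a + 1, b + 1), (a - 1, b), (a - 1, b + 1),
    ⟨circularLadder_adj_add_one a b, circularLadder_adj_rung (a + 1) b,
      (circularLadder_adj_add_one a (b + 1)).symm, by simp [hb], by simp [hb.symm]⟩,
    ⟨circularLadder_adj_sub_one a b, circularLadder_adj_rung (a - 1) b,
      (circularLadder_adj_sub_one a (b + 1)).symm, by simp [hb], by simp [hb.symm]⟩, ?_⟩
  intro h
  apply two_ne_zero_fin_add_three (k := k)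
  linear_combination congrArg Prod.fst h

lemma liesOnTwoSquares_circularLadder_iff (hk : k + 3 ≠ 4) {u v : Fin (k + 3) × Fin 2} :
    LiesOnTwoSquares (circularLadder (k + 3)) u v ↔ u.1 = v.1 ∧ u.2 ≠ v.2 := by
  refine ⟨fun ⟨huv, w, x, w', x', hsq, hsq', hne⟩ => ?_, fun ⟨ha, hb⟩ => ?_⟩
  · obtain ⟨a, b⟩ := v
    obtain ⟨hb, ha | ha⟩ | huv := circularLadder_adj_iff.mp huv
    · obtain rfl : u = (a + 1, b) := Prod.ext (by linear_combination ha) hb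
      exact absurd ((circularLadder_squareThrough_add_one hk hsq.symm).2.trans
        (circularLadder_squareThrough_add_one hk hsq'.symm).2.symm) hne
    · obtain ⟨c, d⟩ := u
      obtain ⟨rfl, rfl⟩ : a = c + 1 ∧ b = d := ⟨by linear_combination ha, hb.symm⟩
      exact absurd ((circularLadder_squareThrough_add_one hk hsq).1.trans
        (circularLadder_squareThrough_add_one hk hsq').1.symm) hne
    · exact huv
  · obtain ⟨a, b⟩ := u
    obtain rfl : v = (a, b + 1) := Prod.ext ha.symm (fin_two_eq_add_one_of_ne (Ne.symm hb))
    exact liesOnTwoSquares_circularLadder_rung a b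

lemma eq_add_mul_of_cycleGraph_adj {f : Fin (k + 3) → Fin (k + 3)}
    (hf : ∀ a, (cycleGraph (k + 3)).Adj (f a) (f (a + 1))) (hinj : Function.Injective f) :
    ∃ s, (s = 1 ∨ s = -1) ∧ ∀ a, f a = f 0 + s * a := by
  have hstep (a : Fin (k + 3)) : f (a + 1) - f a = 1 ∨ f (a + 1) - f a = -1 :=
    (cycleGraph_adj.mp (hf a).symm).imp id fun h => by linear_combination -h
  have hconst (a : Fin (k + 3)) : f (a + 1 + 1) - f (a + 1) = f (a + 1) - f a := by
    have hback (h : f (a + 1 + 1) = f a) : False :=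
      two_ne_zero_fin_add_three (by linear_combination hinj h)
    rcases hstep a with h | h <;> rcases hstep (a + 1) with h' | h'
    · rw [h, h']
    · exact (hback (by linear_combination h + h')).elim
    · exact (hback (by linear_combination h + h')).elim
    · rw [h, h']
  have hs (a : Fin (k + 3)) : f (a + 1) - f a = f (0 + 1) - f 0 := by
    induction a using Fin.induction_add_one with
    | zero => rfl
    | add_one a ih => exact (hconst a).trans ih
  refine ⟨f (0 + 1) - f 0, hstep 0, fun a => ?_⟩
  induction a using Fin.induction_add_one with
  | zero => simp
  | add_one a ih => linear_combination hs a + ih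

lemma exists_circularLadder_iso_apply_eq (hk : k + 3 ≠ 4)
    (φ : circularLadder (k + 3) ≃g circularLadder (k + 3)) :
    ∃ c s t, (s = 1 ∨ s = -1) ∧ ∀ a b, φ (a, b) = (c + s * a, b + t) := by
  have hrung (a : Fin (k + 3)) :
      (φ (a, 1)).1 = (φ (a, 0)).1 ∧ (φ (a, 1)).2 = (φ (a, 0)).2 + 1 := by
    obtain ⟨h1, h2⟩ := (liesOnTwoSquares_circularLadder_iff hk).mp
      ((Iso.liesOnTwoSquares_iff φ).mpr (liesOnTwoSquares_circularLadder_rung a 0))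
    exact ⟨h1.symm, fin_two_eq_add_one_of_ne (Ne.symm h2)⟩
  have hcycle (a : Fin (k + 3)) :
      (φ (a, 0)).2 = (φ (a + 1, 0)).2 ∧
        (cycleGraph (k + 3)).Adj (φ (a, 0)).1 (φ (a + 1, 0)).1 := by
    have hnot_rung : ¬ LiesOnTwoSquares (circularLadder (k + 3)) (φ (a, 0)) (φ (a + 1, 0)) := by
      rw [Iso.liesOnTwoSquares_iff, liesOnTwoSquares_circularLadder_iff hk]
      simp
    have hadj := φ.map_adj_iff.mpr (circularLadder_adj_add_one a 0)
    exact (circularLadder_adj_iff.mp hadj).resolve_right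
      fun h => hnot_rung ((liesOnTwoSquares_circularLadder_iff hk).mpr h)
  set t := (φ (0, 0)).2
  have hsnd (a : Fin (k + 3)) : (φ (a, 0)).2 = t := by
    induction a using Fin.induction_add_one with
    | zero => rfl
    | add_one a ih => rw [← (hcycle a).1, ih]
  have hinj : Function.Injective fun a => (φ (a, 0)).1 := fun a a' h =>
    congrArg Prod.fst (φ.injective (Prod.ext h ((hsnd a).trans (hsnd a').symm)))
  obtain ⟨s, hs, hfst⟩ := eq_add_mul_of_cycleGraph_adj (fun a => (hcycle a).2) hinj
  refine ⟨(φ (0, 0)).1, s, t, hs, fun a b => ?_⟩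
  fin_cases b
  · exact Prod.ext (hfst a) ((hsnd a).trans (zero_add t).symm)
  · exact Prod.ext ((hrung a).1.trans (hfst a)) (by simp [(hrung a).2, hsnd, add_comm])

lemma circularLadder_aut_eq_one_or_reflection (hk : k + 3 ≠ 4)
    {g : Equiv.Perm (Fin (k + 3) × Fin 2)}
    (hg : ∀ u v, (circularLadder (k + 3)).Adj (g u) (g v) ↔ (circularLadder (k + 3)).Adj u v)
    {i : Fin (k + 3)} {j : Fin 2} (hfix : g (i, j) = (i, j)) :
    g = 1 ∨ ∀ a b, g (a, b) = (i + i - a, b) := by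
  obtain ⟨c, s, t, hs, hφ⟩ := exists_circularLadder_iso_apply_eq hk ⟨g, hg _ _⟩
  simp only [RelIso.coe_fn_mk] at hφ
  rw [hφ, Prod.mk.injEq] at hfix
  obtain ⟨hc, ht⟩ := hfix
  obtain rfl : t = 0 := by simpa using ht
  rcases hs with rfl | rfl
  · obtain rfl : c = 0 := by linear_combination hc
    exact .inl (Equiv.ext fun ⟨a, b⟩ => by simp [hφ])
  · refine .inr fun a b => ?_
    rw [hφ, Prod.mk.injEq]
    exact ⟨by linear_combination hc, add_zero b⟩

end Ladder

theorem stmt9 (n : ℕ) (hn : 3 ≤ n) (hn4 : n ≠ 4)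
    (G : Subgroup (Equiv.Perm (Fin n × Fin 2)))
    (hAut : ∀ g ∈ G, ∀ u v, (circularLadder n).Adj (g u) (g v) ↔ (circularLadder n).Adj u v)
    (hTrans : ∀ u v : Fin n × Fin 2, ∃ g ∈ G, g u = v) :
    ∀ N : Subgroup (Equiv.Perm (Fin n × Fin 2)), N ≤ G →
      (∀ g ∈ G, ∀ m ∈ N, g * m * g⁻¹ ∈ N) →
      (∀ a ∈ N, ∀ b ∈ N, a * b = b * a) →
      Semiregular N := by
  obtain ⟨k, rfl⟩ : ∃ k, n = k + 3 := ⟨n - 3, by omega⟩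
  intro N hNG hNormal hComm m hm ⟨i, j⟩ hfix
  obtain ⟨g, hgG, hg⟩ := hTrans (i, j) (i + 1, j)
  have hm' : g * m * g⁻¹ ∈ N := hNormal g hgG m hm
  have hfix' : (g * m * g⁻¹) (i + 1, j) = (i + 1, j) := by
    simp [Equiv.Perm.mul_apply, ← hg, hfix]
  rcases circularLadder_aut_eq_one_or_reflection hn4 (hAut m (hNG hm)) hfix with hm1 | hrefl
  · exact hm1
  rcases circularLadder_aut_eq_one_or_reflection hn4 (hAut _ (hNG hm')) hfix' with hm1' | hrefl'
  · exact conj_eq_one_iff.mp hm1'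
  -- At `(0, 0)` the two products have first coordinates `-2` and `2`.
  have hcomm := congrArg (fun p => (p (0, 0)).1) (hComm m hm _ hm')
  simp only [Equiv.Perm.mul_apply, hrefl, hrefl'] at hcomm
  exact absurd (by linear_combination -hcomm) (four_ne_zero_fin_add_three hn4)

end Stmt9
end

section
/- Let n ≥ 4 be an integer, let Γ be the Möbius ladder graph, i.e. the Cayley graph Cay(Z_{2n}, {1, −1, n}), and let G be a vertex-transitive group of automorphisms of Γ. Then every abelian normal subgroup of G is semiregular on the vertices of Γ. -/
/- STATEMENT 10:
Let n ≥ 4, let Γ be the Möbius ladder graph Cay(ℤ_{2n}, {1,−1,n}), and let G be a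
vertex-transitive group of automorphisms of Γ. Then every abelian normal subgroup of G
is semiregular on the vertices of Γ. -/

namespace Stmt10

/-- The Möbius ladder graph: the Cayley graph of `ℤ_{2n}` with connection set
`{1, −1, n}`. -/
def mobiusLadder (n : ℕ) : SimpleGraph (ZMod (2 * n)) :=
  SimpleGraph.fromRel (fun a b => b - a = 1 ∨ b - a = (n : ZMod (2 * n)))

/-- A set of permutations is semiregular if only the identity fixes a point. -/
def Semiregular {V : Type} (N : Subgroup (Equiv.Perm V)) : Prop :=
  ∀ n ∈ N, ∀ v : V, n v = v → n = 1

section Aux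

variable {n : ℕ}

lemma castInj (hn : 4 ≤ n) {a b : ℕ} (ha : a < 2*n) (hb : b < 2*n)
    (h : (a : ZMod (2*n)) = b) : a = b := by
  haveI : NeZero (2*n) := ⟨by omega⟩
  have := congrArg ZMod.val h
  rwa [ZMod.val_cast_of_lt ha, ZMod.val_cast_of_lt hb] at this

lemma two_n_cast : ((2*n : ℕ) : ZMod (2*n)) = 0 := ZMod.natCast_self _

lemma nn_zero : (n : ZMod (2*n)) + (n : ZMod (2*n)) = 0 := by
  have := two_n_cast (n := n); push_cast at this; linear_combination this

/-- Normalized adjacency in the Möbius ladder. -/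
lemma adj_iff (hn : 4 ≤ n) (a b : ZMod (2*n)) :
    (mobiusLadder n).Adj a b ↔
      a ≠ b ∧ (b - a = 1 ∨ a - b = 1 ∨ b - a = (n : ZMod (2*n))) := by
  have hnn := nn_zero (n := n)
  constructor
  · rintro ⟨hne, h⟩
    refine ⟨hne, ?_⟩
    rcases h with (h | h) | (h | h)
    · exact Or.inl h
    · exact Or.inr (Or.inr h)
    · exact Or.inr (Or.inl h)
    · exact Or.inr (Or.inr (by linear_combination -h - hnn))
  · rintro ⟨hne, h⟩
    refine ⟨hne, ?_⟩
    rcases h with h | h | h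
    · exact Or.inl (Or.inl h)
    · exact Or.inr (Or.inl h)
    · exact Or.inl (Or.inr h)

lemma nbr (hn : 4 ≤ n) {a x : ZMod (2*n)} (h : (mobiusLadder n).Adj a x) :
    x = a + 1 ∨ x = a - 1 ∨ x = a + n := by
  rcases ((adj_iff hn a x).mp h).2 with h' | h' | h'
  · exact Or.inl (by linear_combination h')
  · exact Or.inr (Or.inl (by linear_combination -h'))
  · exact Or.inr (Or.inr (by linear_combination h'))

/-- `Q a b`: the edge `{a,b}` lies on two distinct 4-cycles. -/
def Q (n : ℕ) (a b : ZMod (2*n)) : Prop :=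
  ∃ x y x' y' : ZMod (2*n),
    (mobiusLadder n).Adj a x ∧ (mobiusLadder n).Adj x y ∧ (mobiusLadder n).Adj y b ∧
    x ≠ b ∧ y ≠ a ∧
    (mobiusLadder n).Adj a x' ∧ (mobiusLadder n).Adj x' y' ∧ (mobiusLadder n).Adj y' b ∧
    x' ≠ b ∧ y' ≠ a ∧ (x ≠ x' ∨ y ≠ y')

lemma Q_symm {a b : ZMod (2*n)} (h : Q n a b) : Q n b a := by
  obtain ⟨x, y, x', y', h1, h2, h3, h4, h5, h6, h7, h8, h9, h10, h11⟩ := h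
  exact ⟨y, x, y', x', h3.symm, h2.symm, h1.symm, h5, h4, h8.symm, h7.symm, h6.symm,
    h10, h9, h11.symm⟩

lemma cne (hn : 4 ≤ n) {a b : ℕ} (ha : a < 2*n) (hb : b < 2*n) (hne : a ≠ b) :
    (a : ZMod (2*n)) ≠ (b : ZMod (2*n)) := fun h => hne (castInj hn ha hb h)

lemma adj_of (hn : 4 ≤ n) {a b : ZMod (2*n)}
    (h : b - a = 1 ∨ a - b = 1 ∨ b - a = (n : ZMod (2*n))) :
    (mobiusLadder n).Adj a b := by
  refine (adj_iff hn a b).mpr ⟨?_, h⟩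
  intro he
  subst he
  rcases h with h | h | h
  · exact cne hn (a := 1) (b := 0) (by omega) (by omega) (by omega)
      (by push_cast; linear_combination -h)
  · exact cne hn (a := 1) (b := 0) (by omega) (by omega) (by omega)
      (by push_cast; linear_combination -h)
  · exact cne hn (a := n) (b := 0) (by omega) (by omega) (by omega)
      (by push_cast; linear_combination -h)

lemma adj_succ (hn : 4 ≤ n) (a : ZMod (2*n)) : (mobiusLadder n).Adj a (a + 1) :=
  adj_of hn (Or.inl (by ring))

/-- The rung edge `{a, a+n}` lies on two distinct 4-cycles. -/
lemma Q_rung (hn : 4 ≤ n) (a : ZMod (2*n)) : Q n a (a + n) := by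
  refine ⟨a + 1, a + 1 + n, a - 1, a - 1 + n,
    adj_of hn (Or.inl (by ring)),
    adj_of hn (Or.inr (Or.inr (by ring))),
    adj_of hn (Or.inr (Or.inl (by ring))),
    ?_, ?_,
    adj_of hn (Or.inr (Or.inl (by ring))),
    adj_of hn (Or.inr (Or.inr (by ring))),
    adj_of hn (Or.inl (by ring)),
    ?_, ?_, Or.inl ?_⟩
  · intro h
    exact cne hn (a := n) (b := 1) (by omega) (by omega) (by omega)
      (by push_cast; linear_combination -h)
  · intro h
    exact cne hn (a := n+1) (b := 0) (by omega) (by omega) (by omega)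
      (by push_cast; linear_combination h)
  · intro h
    exact cne hn (a := n+1) (b := 0) (by omega) (by omega) (by omega)
      (by push_cast; linear_combination -h)
  · intro h
    exact cne hn (a := n) (b := 1) (by omega) (by omega) (by omega)
      (by push_cast; linear_combination h)
  · intro h
    exact cne hn (a := 2) (b := 0) (by omega) (by omega) (by omega)
      (by push_cast; linear_combination h)

/-- A cycle edge `{a, a+1}` lies on a unique 4-cycle. -/
lemma unique4 (hn : 4 ≤ n) {a x y : ZMod (2*n)}
    (h1 : (mobiusLadder n).Adj a x) (h2 : (mobiusLadder n).Adj x y)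
    (h3 : (mobiusLadder n).Adj y (a + 1)) (hx : x ≠ a + 1) (hy : y ≠ a) :
    x = a + n ∧ y = a + 1 + n := by
  have hnn := nn_zero (n := n)
  rcases nbr hn h1 with hx1 | hx1 | hx1
  · exact absurd hx1 hx
  · -- x = a - 1
    rcases nbr hn h3.symm with hy1 | hy1 | hy1
    · exfalso; subst hx1; subst hy1
      rcases ((adj_iff hn _ _).mp h2).2 with h | h | h
      · exact cne hn (a := 2) (b := 0) (by omega) (by omega) (by omega)
          (by push_cast; linear_combination h)
      · exact cne hn (a := 4) (b := 0) (by omega) (by omega) (by omega)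
          (by push_cast; linear_combination -h)
      · exact cne hn (a := n) (b := 3) (by omega) (by omega) (by omega)
          (by push_cast; linear_combination -h)
    · exfalso; apply hy; rw [hy1]; ring
    · exfalso; subst hx1; subst hy1
      rcases ((adj_iff hn _ _).mp h2).2 with h | h | h
      · exact cne hn (a := n+1) (b := 0) (by omega) (by omega) (by omega)
          (by push_cast; linear_combination h)
      · exact cne hn (a := n+3) (b := 0) (by omega) (by omega) (by omega)
          (by push_cast; linear_combination -h)
      · exact cne hn (a := 2) (b := 0) (by omega) (by omega) (by omega)
          (by push_cast; linear_combination h)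
  · -- x = a + n
    rcases nbr hn h3.symm with hy1 | hy1 | hy1
    · exfalso; subst hx1; subst hy1
      rcases ((adj_iff hn _ _).mp h2).2 with h | h | h
      · exact cne hn (a := n+1) (b := 2) (by omega) (by omega) (by omega)
          (by push_cast; linear_combination -h)
      · exact cne hn (a := n) (b := 3) (by omega) (by omega) (by omega)
          (by push_cast; linear_combination h)
      · exact cne hn (a := 2) (b := 0) (by omega) (by omega) (by omega)
          (by push_cast; linear_combination h + hnn)
    · exfalso; apply hy; rw [hy1]; ring
    · subst hx1; subst hy1; exact ⟨rfl, rfl⟩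

lemma Q_not (hn : 4 ≤ n) (a : ZMod (2*n)) : ¬ Q n a (a + 1) := by
  rintro ⟨x, y, x', y', h1, h2, h3, h4, h5, h6, h7, h8, h9, h10, h11⟩
  obtain ⟨hx, hy⟩ := unique4 hn h1 h2 h3 h4 h5
  obtain ⟨hx', hy'⟩ := unique4 hn h6 h7 h8 h9 h10
  rcases h11 with h | h
  · exact h (hx.trans hx'.symm)
  · exact h (hy.trans hy'.symm)

/-- Characterization of cycle edges. -/
lemma cyc_iff (hn : 4 ≤ n) (a b : ZMod (2*n)) :
    ((mobiusLadder n).Adj a b ∧ ¬ Q n a b) ↔ (b = a + 1 ∨ a = b + 1) := by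
  constructor
  · rintro ⟨hadj, hQ⟩
    rcases ((adj_iff hn a b).mp hadj).2 with h | h | h
    · exact Or.inl (by linear_combination h)
    · exact Or.inr (by linear_combination h)
    · exfalso; apply hQ
      have : b = a + n := by linear_combination h
      rw [this]; exact Q_rung hn a
  · rintro (h | h)
    · subst h; exact ⟨adj_succ hn a, Q_not hn a⟩
    · subst h
      exact ⟨(adj_succ hn b).symm, fun hQ => Q_not hn b (Q_symm hQ)⟩

/-- Adjacency-preserving permutations preserve `Q`. -/
lemma Q_map (hn : 4 ≤ n) (g : Equiv.Perm (ZMod (2*n)))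
    (hg : ∀ u v, (mobiusLadder n).Adj (g u) (g v) ↔ (mobiusLadder n).Adj u v)
    {a b : ZMod (2*n)} (h : Q n a b) : Q n (g a) (g b) := by
  obtain ⟨x, y, x', y', h1, h2, h3, h4, h5, h6, h7, h8, h9, h10, h11⟩ := h
  refine ⟨g x, g y, g x', g y', (hg _ _).mpr h1, (hg _ _).mpr h2, (hg _ _).mpr h3,
    fun e => h4 (g.injective e), fun e => h5 (g.injective e),
    (hg _ _).mpr h6, (hg _ _).mpr h7, (hg _ _).mpr h8,
    fun e => h9 (g.injective e), fun e => h10 (g.injective e), ?_⟩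
  rcases h11 with h | h
  · exact Or.inl (fun e => h (g.injective e))
  · exact Or.inr (fun e => h (g.injective e))

lemma hg_symm (g : Equiv.Perm (ZMod (2*n)))
    (hg : ∀ u v, (mobiusLadder n).Adj (g u) (g v) ↔ (mobiusLadder n).Adj u v) :
    ∀ u v, (mobiusLadder n).Adj (g.symm u) (g.symm v) ↔ (mobiusLadder n).Adj u v := by
  intro u v
  have := hg (g.symm u) (g.symm v)
  simpa using this.symm

/-- An adjacency-preserving permutation preserves the cycle structure. -/
lemma cyc_step (hn : 4 ≤ n) (g : Equiv.Perm (ZMod (2*n)))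
    (hg : ∀ u v, (mobiusLadder n).Adj (g u) (g v) ↔ (mobiusLadder n).Adj u v)
    (a : ZMod (2*n)) : g (a + 1) = g a + 1 ∨ g a = g (a + 1) + 1 := by
  have h1 : (mobiusLadder n).Adj a (a + 1) ∧ ¬ Q n a (a + 1) :=
    (cyc_iff hn a (a + 1)).mpr (Or.inl rfl)
  have h2 : (mobiusLadder n).Adj (g a) (g (a+1)) ∧ ¬ Q n (g a) (g (a+1)) := by
    refine ⟨(hg _ _).mpr h1.1, fun hQ => h1.2 ?_⟩
    have := Q_map hn g.symm (hg_symm g hg) hQ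
    simpa using this
  exact ((cyc_iff hn _ _).mp h2).symm.elim (fun h => Or.inr h) (fun h => Or.inl h)

/-- Every adjacency-preserving permutation is of dihedral form. -/
lemma dihedral (hn : 4 ≤ n) (g : Equiv.Perm (ZMod (2*n)))
    (hg : ∀ u v, (mobiusLadder n).Adj (g u) (g v) ↔ (mobiusLadder n).Adj u v) :
    (∃ c, ∀ x, g x = x + c) ∨ (∃ c, ∀ x, g x = c - x) := by
  haveI : NeZero (2*n) := ⟨by omega⟩
  have h2ne : (2 : ZMod (2*n)) ≠ 0 := by
    intro h
    exact cne hn (a := 2) (b := 0) (by omega) (by omega) (by omega)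
      (by push_cast; linear_combination h)
  -- the "direction" of g at a
  have key : ∀ a : ZMod (2*n), g (a + 1) - g a = g 1 - g 0 := by
    have hstep : ∀ a : ZMod (2*n), g (a+1) - g a = 1 ∨ g (a+1) - g a = -1 := by
      intro a
      rcases cyc_step hn g hg a with h | h
      · exact Or.inl (by linear_combination h)
      · exact Or.inr (by linear_combination -h)
    have hconst : ∀ a : ZMod (2*n), g (a + 1 + 1) - g (a + 1) = g (a + 1) - g a := by
      intro a
      rcases hstep a with h | h <;> rcases hstep (a + 1) with h' | h'
      · rw [h, h']
      · exfalso
        have : g (a + 1 + 1) = g a := by linear_combination h + h'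
        have := g.injective this
        apply h2ne
        linear_combination this
      · exfalso
        have : g (a + 1 + 1) = g a := by linear_combination h + h'
        have := g.injective this
        apply h2ne
        linear_combination this
      · rw [h, h']
    have hnat : ∀ k : ℕ, g ((k : ZMod (2*n)) + 1) - g (k : ZMod (2*n)) = g 1 - g 0 := by
      intro k
      induction k with
      | zero => simp
      | succ m ih =>
        have := hconst (m : ZMod (2*n))
        push_cast
        push_cast at ih
        rw [this]; exact ih
    intro a
    have hval : ((a.val : ℕ) : ZMod (2*n)) = a := ZMod.natCast_rightInverse a
    rw [← hval]; exact hnat a.val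
  set e := g 1 - g 0 with he
  have hee : e = 1 ∨ e = -1 := by
    rcases cyc_step hn g hg 0 with h | h
    · left; rw [he]; rw [zero_add] at h; linear_combination h
    · right; rw [he]; rw [zero_add] at h; linear_combination -h
  have hform : ∀ x : ZMod (2*n), g x = g 0 + e * x := by
    have hnat : ∀ k : ℕ, g (k : ZMod (2*n)) = g 0 + e * k := by
      intro k
      induction k with
      | zero => simp
      | succ m ih =>
        have hk := key (m : ZMod (2*n))
        push_cast
        push_cast at ih
        linear_combination hk + ih
    intro x
    have hval : ((x.val : ℕ) : ZMod (2*n)) = x := ZMod.natCast_rightInverse x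
    rw [← hval]; exact hnat x.val
  rcases hee with h | h
  · left; exact ⟨g 0, fun x => by rw [hform x, h]; ring⟩
  · right; exact ⟨g 0, fun x => by rw [hform x, h]; ring⟩

end Aux

theorem stmt10 (n : ℕ) (hn : 4 ≤ n)
    (G : Subgroup (Equiv.Perm (ZMod (2 * n))))
    (hAut : ∀ g ∈ G, ∀ u v, (mobiusLadder n).Adj (g u) (g v) ↔ (mobiusLadder n).Adj u v)
    (hTrans : ∀ u v : ZMod (2 * n), ∃ g ∈ G, g u = v) :
    ∀ N : Subgroup (Equiv.Perm (ZMod (2 * n))), N ≤ G →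
      (∀ g ∈ G, ∀ m ∈ N, g * m * g⁻¹ ∈ N) →
      (∀ a ∈ N, ∀ b ∈ N, a * b = b * a) →
      Semiregular N := by
  intro N hNG hnorm hab m hmN v hmv
  have h4ne : (4 : ZMod (2*n)) ≠ 0 := by
    intro h
    exact cne hn (a := 4) (b := 0) (by omega) (by omega) (by omega)
      (by push_cast; linear_combination h)
  rcases dihedral hn m (hAut m (hNG hmN)) with ⟨c, hc⟩ | ⟨c, hc⟩
  · -- rotation fixing a point is the identity
    have hc0 : c = 0 := by
      have := hc v; rw [hmv] at this; linear_combination -this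
    ext x
    rw [hc x, hc0, add_zero]; rfl
  · -- m is a reflection x ↦ c - x, with c = 2v
    have hcv : c = v + v := by have := hc v; rw [hmv] at this; linear_combination -this
    obtain ⟨g, hgG, hgv⟩ := hTrans v (v + 1)
    set m' := g * m * g⁻¹ with hm'
    have hm'N : m' ∈ N := hnorm g hgG m hmN
    have hm'fix : m' (v + 1) = v + 1 := by
      have : g⁻¹ (v + 1) = v := by rw [← hgv]; simp
      simp only [hm', Equiv.Perm.mul_apply, this, hmv, hgv]
    rcases dihedral hn m' (hAut m' (hNG hm'N)) with ⟨c', hc'⟩ | ⟨c', hc'⟩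
    · -- m' is a rotation fixing v+1, so m' = 1, hence m = 1
      have hc0 : c' = 0 := by
        have := hc' (v + 1); rw [hm'fix] at this; linear_combination -this
      have hm'1 : m' = 1 := by
        ext x; rw [hc' x, hc0, add_zero]; rfl
      have : m = 1 := by
        have := hm'1
        rw [hm'] at this
        calc m = g⁻¹ * (g * m * g⁻¹) * g := by group
        _ = g⁻¹ * 1 * g := by rw [this]
        _ = 1 := by group
      exact this
    · -- both m and m' are reflections; commutativity gives a contradiction
      exfalso
      have hcv' : c' = (v + 1) + (v + 1) := by
        have := hc' (v + 1); rw [hm'fix] at this; linear_combination -this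
      have hcomm := hab m hmN m' hm'N
      have h0 : (m * m') 0 = (m' * m) 0 := by rw [hcomm]
      simp only [Equiv.Perm.mul_apply] at h0
      rw [hc, hc', hc, hc'] at h0
      -- h0 : c - (c' - 0) = c' - (c - 0)
      apply h4ne
      have : c' = c + 2 := by rw [hcv', hcv]; ring
      rw [this] at h0
      linear_combination -h0

end Stmt10
end

section
/- Let Γ be a finite connected cubic G-vertex-transitive graph such that every abelian normal subgroup of G is semiregular on the vertices of Γ. Let N be a nontrivial abelian normal subgroup of G and let K be the kernel of the induced action of G on the set of N-orbits on vertices. Then the centralizer of N in K equals N, i.e. C_K(N) = N. -/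
/-!
Let `C = C_K(N)`. An element of `K` moves each vertex within its `N`-orbit, so on the orbit of
`w` an element `c ∈ C` agrees with the element `n ∈ N` satisfying `c w = n w`, because both
commute with `N`. Since `N` is abelian, any two elements of `C` therefore commute. Moreover
`K` and `C_G(N)` are both normalized by `G`, so `C` is an abelian normal subgroup of `G` and
hence semiregular. Finally `N ≤ C`, and if `c ∈ C` agrees with `n ∈ N` at one vertex then
`n⁻¹ c ∈ C` fixes it, so `c = n ∈ N`.
-/

namespace Stmt17

/-- A set of permutations is semiregular if only the identity fixes a point. -/
def Semiregular {V : Type} (N : Subgroup (Equiv.Perm V)) : Prop :=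
  ∀ n ∈ N, ∀ v : V, n v = v → n = 1

open MulAction Equiv

theorem conj_mem_centralizer {G : Type*} [Group G] {s : Set G} {g c : G}
    (hg : ∀ n ∈ s, g⁻¹ * n * g ∈ s) (hc : c ∈ Subgroup.centralizer s) :
    g * c * g⁻¹ ∈ Subgroup.centralizer s := by
  rw [Subgroup.mem_centralizer_iff] at hc ⊢
  intro n hn
  calc n * (g * c * g⁻¹) = g * ((g⁻¹ * n * g) * c) * g⁻¹ := by group
    _ = g * (c * (g⁻¹ * n * g)) * g⁻¹ := by rw [hc _ (hg n hn)]
    _ = g * c * g⁻¹ * n := by group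

variable {V : Type}

def orbitKernel (N : Subgroup (Perm V)) : Subgroup (Perm V) where
  carrier := {g | ∀ w, g w ∈ orbit N w}
  one_mem' w := mem_orbit_self w
  mul_mem' {g h} hg hh w := orbit_eq_iff.mpr (hh w) ▸ hg (h w)
  inv_mem' {g} hg w := by simpa using mem_orbit_symm.mp (hg (g⁻¹ w))

variable {N : Subgroup (Perm V)}

theorem mem_orbitKernel {g : Perm V} : g ∈ orbitKernel N ↔ ∀ w, g w ∈ orbit N w := Iff.rfl

theorem le_orbitKernel : N ≤ orbitKernel N := fun n hn _ => ⟨⟨n, hn⟩, rfl⟩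

theorem exists_apply_eq_of_mem_orbitKernel {g : Perm V} (hg : g ∈ orbitKernel N) (w : V) :
    ∃ n ∈ N, g w = n w := by
  obtain ⟨⟨n, hn⟩, h⟩ := hg w
  exact ⟨n, hn, h.symm⟩

theorem conj_mem_orbitKernel {g c : Perm V} (hg : ∀ n ∈ N, g * n * g⁻¹ ∈ N)
    (hc : c ∈ orbitKernel N) : g * c * g⁻¹ ∈ orbitKernel N := by
  intro w
  obtain ⟨n, hn, hnw⟩ := exists_apply_eq_of_mem_orbitKernel hc (g⁻¹ w)
  refine ⟨⟨g * n * g⁻¹, hg n hn⟩, ?_⟩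
  change g (n (g⁻¹ w)) = g (c (g⁻¹ w))
  rw [hnw]

theorem commute_of_mem_orbitKernel_inf_centralizer (hN : ∀ a ∈ N, ∀ b ∈ N, a * b = b * a)
    {a b : Perm V} (ha : a ∈ orbitKernel N ⊓ Subgroup.centralizer N)
    (hb : b ∈ orbitKernel N ⊓ Subgroup.centralizer N) : a * b = b * a := by
  ext w
  obtain ⟨m, hm, hmw⟩ := exists_apply_eq_of_mem_orbitKernel ha.1 w
  obtain ⟨n, hn, hnw⟩ := exists_apply_eq_of_mem_orbitKernel hb.1 w
  have han : n * a = a * n := Subgroup.mem_centralizer_iff.mp ha.2 n hn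
  have hbm : m * b = b * m := Subgroup.mem_centralizer_iff.mp hb.2 m hm
  calc a (b w) = (n * m) w := by rw [hnw, ← Perm.mul_apply, ← han, Perm.mul_apply, hmw]; rfl
    _ = (m * n) w := by rw [hN n hn m hm]
    _ = b (a w) := by rw [Perm.mul_apply, ← hnw, ← Perm.mul_apply, hbm, Perm.mul_apply, hmw]

theorem Semiregular.eq_of_apply_eq {C : Subgroup (Perm V)} (hC : Semiregular C) {g h : Perm V}
    (hg : g ∈ C) (hh : h ∈ C) {v : V} (hv : g v = h v) : g = h :=
  (inv_mul_eq_one.mp <| hC _ (C.mul_mem (C.inv_mem hh) hg) v (by simp [Perm.mul_apply, hv])).symm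

theorem Semiregular.le_of_le_orbitKernel {C : Subgroup (Perm V)} (hC : Semiregular C) (hNC : N ≤ C)
    (hCK : C ≤ orbitKernel N) : C ≤ N := by
  intro g hg
  rcases isEmpty_or_nonempty V with hV | ⟨⟨v⟩⟩
  · simp [Subsingleton.elim g 1]
  · obtain ⟨n, hn, hv⟩ := exists_apply_eq_of_mem_orbitKernel (hCK hg) v
    exact hC.eq_of_apply_eq hg (hNC hn) hv ▸ hn

theorem stmt17_general {V : Type}
    (G : Subgroup (Equiv.Perm V))
    (hallsemi : ∀ N : Subgroup (Equiv.Perm V), N ≤ G →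
      (∀ g ∈ G, ∀ n ∈ N, g * n * g⁻¹ ∈ N) →
      (∀ a ∈ N, ∀ b ∈ N, a * b = b * a) → Semiregular N)
    (N : Subgroup (Equiv.Perm V)) (hNG : N ≤ G)
    (hNnormal : ∀ g ∈ G, ∀ n ∈ N, g * n * g⁻¹ ∈ N)
    (hNab : ∀ a ∈ N, ∀ b ∈ N, a * b = b * a)
    -- K is the kernel of the action of G on the set of N-orbits:
    -- it consists of those g ∈ G fixing every N-orbit setwise
    (K : Subgroup (Equiv.Perm V))
    (hK : ∀ g : Equiv.Perm V,
      g ∈ K ↔ g ∈ G ∧ ∀ w : V, g w ∈ MulAction.orbit (↥N) w) :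
    -- the centralizer of N in K equals N
    {g : Equiv.Perm V | g ∈ K ∧ ∀ n ∈ N, g * n = n * g} = (N : Set (Equiv.Perm V)) := by
  obtain rfl : K = G ⊓ orbitKernel N := by ext g; rw [hK, Subgroup.mem_inf, mem_orbitKernel]
  set C := G ⊓ orbitKernel N ⊓ Subgroup.centralizer N
  have hNC : N ≤ C := le_inf (le_inf hNG le_orbitKernel) fun n hn =>
    Subgroup.mem_centralizer_iff.mpr fun m hm => hNab m hm n hn
  have hCsemi : Semiregular C := by
    refine hallsemi C (inf_le_left.trans inf_le_left) (fun g hg c hc => ?_) fun a ha b hb => ?_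
    · have hg' : ∀ n ∈ N, g⁻¹ * n * g ∈ N := by simpa using hNnormal g⁻¹ (G.inv_mem hg)
      exact ⟨⟨G.mul_mem (G.mul_mem hg hc.1.1) (G.inv_mem hg), conj_mem_orbitKernel
        (hNnormal g hg) hc.1.2⟩, conj_mem_centralizer hg' hc.2⟩
    · exact commute_of_mem_orbitKernel_inf_centralizer hNab ⟨ha.1.2, ha.2⟩ ⟨hb.1.2, hb.2⟩
  have hCN : C ≤ N := hCsemi.le_of_le_orbitKernel hNC (inf_le_left.trans inf_le_right)
  refine Set.Subset.antisymm (fun g ⟨hgK, hg⟩ => hCN ⟨hgK, ?_⟩) fun n hn => ⟨(hNC hn).1, ?_⟩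
  · exact Subgroup.mem_centralizer_iff.mpr fun n hn => (hg n hn).symm
  · exact fun m hm => hNab n hn m hm

theorem stmt17 {V : Type} [Fintype V] (Γ : SimpleGraph V)
    (hconn : Γ.Connected)
    (hcubic : ∀ v : V, (Γ.neighborSet v).ncard = 3)
    (G : Subgroup (Equiv.Perm V))
    (hAut : ∀ g ∈ G, ∀ u v : V, Γ.Adj (g u) (g v) ↔ Γ.Adj u v)
    (hTrans : ∀ u v : V, ∃ g ∈ G, g u = v)
    (hallsemi : ∀ N : Subgroup (Equiv.Perm V), N ≤ G →
      (∀ g ∈ G, ∀ n ∈ N, g * n * g⁻¹ ∈ N) →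
      (∀ a ∈ N, ∀ b ∈ N, a * b = b * a) → Semiregular N)
    (N : Subgroup (Equiv.Perm V)) (hNG : N ≤ G) (hNne : N ≠ ⊥)
    (hNnormal : ∀ g ∈ G, ∀ n ∈ N, g * n * g⁻¹ ∈ N)
    (hNab : ∀ a ∈ N, ∀ b ∈ N, a * b = b * a)
    -- K is the kernel of the action of G on the set of N-orbits:
    -- it consists of those g ∈ G fixing every N-orbit setwise
    (K : Subgroup (Equiv.Perm V))
    (hK : ∀ g : Equiv.Perm V,
      g ∈ K ↔ g ∈ G ∧ ∀ w : V, g w ∈ MulAction.orbit (↥N) w) :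
    -- the centralizer of N in K equals N
    {g : Equiv.Perm V | g ∈ K ∧ ∀ n ∈ N, g * n = n * g} = (N : Set (Equiv.Perm V)) :=
  stmt17_general G hallsemi N hNG hNnormal hNab K hK

end Stmt17
end

section
/- Let Γ be a finite connected cubic G-vertex-transitive graph such that every abelian normal subgroup of G is semiregular on the vertices of Γ. Let N be a nontrivial abelian normal subgroup of G having at least three orbits on vertices, and suppose the normal quotient graph Γ/N is a cycle. Then G contains an element g that is semiregular on the vertices of Γ (the cyclic group ⟨g⟩ is semiregular) and whose order is at least |V(Γ)| / (2·|N|·|Aut(N)|). -/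
/-!
`G` acts on the cycle `Γ/N ≅ C_m` transitively by graph automorphisms, that is by rotations
and reflections. Since two reflections differ by a rotation, the rotations induced by `G` form
a cyclic group of order `s ≥ m/2`; let `g₀ ∈ G` induce a generator. Conjugation by `g₀` is an
automorphism of `N`, so `g = g₀ ^ |Aut N|` centralizes `N`. A power of `g` fixing a vertex
induces a rotation with a fixed point, hence fixes every `N`-orbit; it then lies in the subgroup
of `G` centralizing `N` and fixing every `N`-orbit, which is abelian and normal, hence
semiregular, so that power is trivial. Finally `|V| = m |N| ≤ 2 s |N|` and
`s ∣ |Aut N| · ord g`.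
-/

namespace Stmt18

/-- A set of permutations is semiregular if only the identity fixes a point. -/
def Semiregular {V : Type} (N : Subgroup (Equiv.Perm V)) : Prop :=
  ∀ n ∈ N, ∀ v : V, n v = v → n = 1

/-- The normal quotient graph `Γ/N`: vertices are the `N`-orbits, two distinct orbits
being adjacent iff some vertex of one is adjacent in `Γ` to some vertex of the other. -/
def quotGraph {V : Type} (Γ : SimpleGraph V) (N : Subgroup (Equiv.Perm V)) :
    SimpleGraph (Quotient (MulAction.orbitRel (↥N) V)) :=
  SimpleGraph.fromRel (fun a b => ∃ u v : V,
    Quotient.mk (MulAction.orbitRel (↥N) V) u = a ∧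
    Quotient.mk (MulAction.orbitRel (↥N) V) v = b ∧ Γ.Adj u v)

open Equiv MulAction Subgroup SimpleGraph

theorem pow_card_mulAut_mem_centralizer {G : Type*} [Group G] (H : Subgroup G) {g : G}
    (hg : g ∈ normalizer (H : Set G)) : g ^ Nat.card (MulAut H) ∈ centralizer (H : Set G) := by
  have : (⟨g, hg⟩ : normalizer (H : Set G)) ^ Nat.card (MulAut H) ∈
      H.normalizerMonoidHom.ker := by
    rw [MonoidHom.mem_ker, map_pow, pow_card_eq_one']
  rwa [normalizerMonoidHom_ker, mem_subgroupOf] at this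

theorem orderOf_dvd_mul_orderOf_pow {M : Type*} [Monoid M] (x : M) (k : ℕ) :
    orderOf x ∣ k * orderOf (x ^ k) :=
  orderOf_dvd_of_pow_eq_one (by rw [pow_mul, pow_orderOf_eq_one])

theorem normalizer_le_normalizer_centralizer {G : Type*} [Group G] (H : Subgroup G) :
    normalizer (H : Set G) ≤ normalizer (centralizer (H : Set G) : Set G) := by
  refine le_normalizer_iff.mpr fun g hg f hf => mem_centralizer_iff.mpr fun h hh => ?_
  have hc := mem_centralizer_iff.mp hf _ ((mem_normalizer_iff''.mp hg h).mp hh)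
  calc h * (g * f * g⁻¹) = g * ((g⁻¹ * h * g) * f) * g⁻¹ := by group
    _ = g * (f * (g⁻¹ * h * g)) * g⁻¹ := by rw [hc]
    _ = g * f * g⁻¹ * h := by group

section NormalQuotient

variable {V : Type} (N : Subgroup (Perm V))

theorem orbitRel_iff_exists_mem_apply_eq {u v : V} : orbitRel N V u v ↔ ∃ n ∈ N, n v = u := by
  simp [orbitRel_apply, mem_orbit_iff, Subgroup.smul_def, Perm.smul_def]

theorem Semiregular.natCard_eq (hN : Semiregular N) :
    Nat.card V = Nat.card (orbitRel.Quotient N V) * Nat.card N := by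
  have hfree (v : V) : stabilizer N v = ⊥ :=
    (eq_bot_iff_forall _).mpr fun n hn => Subtype.ext (hN n n.2 v hn)
  rw [Nat.card_congr (selfEquivOrbitsQuotientProd hfree), Nat.card_prod]

theorem orbitRel_apply_of_mem_normalizer {g : Perm V} (hg : g ∈ normalizer (N : Set (Perm V)))
    {u v : V} (h : orbitRel N V u v) : orbitRel N V (g u) (g v) := by
  obtain ⟨n, hn, rfl⟩ := (orbitRel_iff_exists_mem_apply_eq N).mp h
  exact (orbitRel_iff_exists_mem_apply_eq N).mpr
    ⟨g * n * g⁻¹, (mem_normalizer_iff.mp hg n).mp hn, by simp⟩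

instance : MulAction (normalizer (N : Set (Perm V))) (orbitRel.Quotient N V) where
  smul g := Quotient.map g fun _ _ => orbitRel_apply_of_mem_normalizer N g.2
  one_smul q := Quotient.inductionOn q fun _ => rfl
  mul_smul _ _ q := Quotient.inductionOn q fun _ => rfl

theorem quotGraph_adj_smul {Γ : SimpleGraph V} {g : normalizer (N : Set (Perm V))}
    (hg : ∀ u v, Γ.Adj u v → Γ.Adj ((g : Perm V) u) ((g : Perm V) v))
    {p q : orbitRel.Quotient N V}
    (h : (quotGraph Γ N).Adj p q) : (quotGraph Γ N).Adj (g • p) (g • q) := by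
  rw [quotGraph, fromRel_adj] at h ⊢
  obtain ⟨hpq, hR⟩ := h
  refine ⟨(MulAction.injective g).ne hpq, ?_⟩
  rcases hR with ⟨u, v, rfl, rfl, huv⟩ | ⟨u, v, rfl, rfl, huv⟩
  · exact .inl ⟨(g : Perm V) u, (g : Perm V) v, rfl, rfl, hg u v huv⟩
  · exact .inr ⟨(g : Perm V) u, (g : Perm V) v, rfl, rfl, hg u v huv⟩

def orbitwiseStabilizer : Subgroup (Perm V) where
  carrier := {f | ∀ v, orbitRel N V (f v) v}
  mul_mem' hf hf' v := (orbitRel N V).trans (hf _) (hf' v)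
  one_mem' v := (orbitRel N V).refl v
  inv_mem' {f} hf v := (orbitRel N V).symm (by simpa using hf (f⁻¹ v))

theorem normalizer_le_normalizer_orbitwiseStabilizer :
    normalizer (N : Set (Perm V)) ≤ normalizer (orbitwiseStabilizer N : Set (Perm V)) :=
  le_normalizer_iff.mpr fun g hg f hf v => by
    simpa using orbitRel_apply_of_mem_normalizer N hg (hf (g⁻¹ v))

theorem commute_of_mem_centralizer_inf_orbitwiseStabilizer
    (hN : ∀ a ∈ N, ∀ b ∈ N, a * b = b * a) {f f' : Perm V}
    (hf : f ∈ centralizer (N : Set (Perm V)) ⊓ orbitwiseStabilizer N)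
    (hf' : f' ∈ centralizer (N : Set (Perm V)) ⊓ orbitwiseStabilizer N) : f * f' = f' * f := by
  ext v
  obtain ⟨n₁, hn₁, hv₁⟩ := (orbitRel_iff_exists_mem_apply_eq N).mp (hf.2 v)
  obtain ⟨n₂, hn₂, hv₂⟩ := (orbitRel_iff_exists_mem_apply_eq N).mp (hf'.2 v)
  have hc := mem_centralizer_iff.mp hf.1
  have hc' := mem_centralizer_iff.mp hf'.1
  calc f (f' v) = f (n₂ v) := by rw [hv₂]
    _ = n₂ (f v) := congrArg (· v) (hc n₂ hn₂).symm
    _ = n₂ (n₁ v) := by rw [hv₁]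
    _ = n₁ (n₂ v) := congrArg (· v) (hN n₂ hn₂ n₁ hn₁)
    _ = n₁ (f' v) := by rw [hv₂]
    _ = f' (n₁ v) := congrArg (· v) (hc' n₁ hn₁)
    _ = f' (f v) := by rw [hv₁]

theorem le_normalizer_inf_centralizer_inf_orbitwiseStabilizer {G : Subgroup (Perm V)}
    (hG : G ≤ normalizer (N : Set (Perm V))) :
    G ≤ normalizer ((G ⊓ (centralizer (N : Set (Perm V)) ⊓ orbitwiseStabilizer N) :
      Subgroup (Perm V)) : Set (Perm V)) := by
  have hN : normalizer (N : Set (Perm V)) ≤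
      normalizer ((centralizer (N : Set (Perm V)) ⊓ orbitwiseStabilizer N : Subgroup (Perm V)) :
        Set (Perm V)) :=
    (le_inf (normalizer_le_normalizer_centralizer N)
      (normalizer_le_normalizer_orbitwiseStabilizer N)).trans inf_normalizer_le_normalizer_inf
  exact (le_inf le_normalizer (hG.trans hN)).trans inf_normalizer_le_normalizer_inf

end NormalQuotient

section CycleGraph

theorem cycleGraph_adj_iff_eq_add_one_or {n : ℕ} {x y : Fin (n + 2)} :
    (cycleGraph (n + 2)).Adj x y ↔ y = x + 1 ∨ y = x - 1 := by
  rw [cycleGraph_adj, sub_eq_iff_eq_add', eq_sub_iff_add_eq, sub_eq_iff_eq_add', eq_comm (a := y)]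
  tauto

theorem add_one_add_one_ne {n : ℕ} (x : Fin (n + 3)) : x + 1 + 1 ≠ x := by
  rw [add_assoc, Ne, add_eq_left, Fin.ext_iff, Fin.val_add, Fin.val_one, Fin.val_zero,
    Nat.mod_eq_of_lt (by omega)]
  omega

open Fin.CommRing in
theorem cycleGraph_hom_apply_eq_add_or_sub {n : ℕ}
    (f : cycleGraph (n + 3) →g cycleGraph (n + 3)) (hf : Function.Injective f) :
    (∀ x, f x = f 0 + x) ∨ ∀ x, f x = f 0 - x := by
  have hstep (x : Fin (n + 3)) : f (x + 1) = f x + 1 ∨ f (x + 1) = f x - 1 :=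
    cycleGraph_adj_iff_eq_add_one_or.mp
      (f.map_adj (cycleGraph_adj_iff_eq_add_one_or.mpr (.inl rfl)))
  -- `f (x + 2) = f x` is excluded by injectivity, so the direction of `f` never reverses
  have hkeep {s : Fin (n + 3)} (hs : s = 1 ∨ s = -1) (x : Fin (n + 3))
      (hx : f (x + 1) = f x + s) : f (x + 1 + 1) = f (x + 1) + s := by
    rcases hstep (x + 1) with h | h <;> rcases hs with rfl | rfl
    · exact h
    · exact absurd (hf (h.trans (by rw [hx]; abel))) (add_one_add_one_ne x)
    · exact absurd (hf (h.trans (by rw [hx]; abel))) (add_one_add_one_ne x)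
    · rw [h, sub_eq_add_neg]
  have hline {s : Fin (n + 3)} (hs : s = 1 ∨ s = -1) (h1 : f 1 = f 0 + s) (x : Fin (n + 3)) :
      f x = f 0 + x * s := by
    have key (i : ℕ) : f i = f 0 + i * s ∧ f (i + 1) = f i + s := by
      induction i with
      | zero => simpa using h1
      | succ i ih =>
        rw [Nat.cast_succ]
        refine ⟨?_, hkeep hs _ ih.2⟩
        rw [ih.2, ih.1, add_mul, one_mul, add_assoc]
    simpa using (key x.val).1
  rcases hstep 0 with h1 | h1
  · exact .inl fun x => by rw [hline (.inl rfl) (by simpa using h1), mul_one]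
  · refine .inr fun x => ?_
    rw [hline (.inr rfl) (by simpa [sub_eq_add_neg] using h1), mul_neg_one,
      sub_eq_add_neg]

end CycleGraph

section Translations

instance (n : ℕ) [NeZero n] : IsAddCyclic (Fin n) :=
  isAddCyclic_of_surjective (ZMod.finEquiv n).symm (ZMod.finEquiv n).symm.surjective

theorem addLeft_eq_one_iff {α : Type*} [AddGroup α] {c : α} : Equiv.addLeft c = 1 ↔ c = 0 :=
  ⟨fun h => by simpa using congrArg (· 0) h, fun h => h ▸ Equiv.addLeft_zero⟩

theorem orderOf_addLeft {α : Type*} [AddGroup α] (c : α) :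
    orderOf (Equiv.addLeft c) = addOrderOf c := by
  have key (k : ℕ) : Equiv.addLeft c ^ k = 1 ↔ k • c = 0 := by
    rw [Equiv.nsmul_addLeft, addLeft_eq_one_iff]
  exact Nat.dvd_antisymm (orderOf_dvd_of_pow_eq_one ((key _).2 (addOrderOf_nsmul_eq_zero c)))
    (addOrderOf_dvd_of_nsmul_eq_zero ((key _).1 (pow_orderOf_eq_one _)))

def translations {α : Type*} [AddGroup α] (H : Subgroup (Perm α)) : AddSubgroup α where
  carrier := {c | Equiv.addLeft c ∈ H}
  add_mem' {a b} ha hb := by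
    simpa only [Set.mem_ofPred_eq, Equiv.addLeft_add] using H.mul_mem ha hb
  zero_mem' := by simpa only [Set.mem_ofPred_eq, Equiv.addLeft_zero] using H.one_mem
  neg_mem' {a} ha := by simpa only [Set.mem_ofPred_eq, ← Equiv.neg_addLeft] using H.inv_mem ha

theorem mem_translations {α : Type*} [AddGroup α] {H : Subgroup (Perm α)} {c : α} :
    c ∈ translations H ↔ Equiv.addLeft c ∈ H :=
  Iff.rfl

variable {n : ℕ} (H : Subgroup (Perm (Fin (n + 3))))
  (hH : ∀ f ∈ H, ∀ x y, (cycleGraph (n + 3)).Adj x y → (cycleGraph (n + 3)).Adj (f x) (f y))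
  (htrans : ∀ y, ∃ f ∈ H, f 0 = y)
include hH htrans

theorem le_two_mul_card_translations : n + 3 ≤ 2 * Nat.card (translations H) := by
  set T := translations H
  have haffine (f) (hf : f ∈ H) : (∀ x, f x = f 0 + x) ∨ ∀ x, f x = f 0 - x :=
    cycleGraph_hom_apply_eq_add_or_sub ⟨f, hH f hf _ _⟩ f.injective
  have hrot (f) (hf : f ∈ H) (h : ∀ x, f x = f 0 + x) : f 0 ∈ T := by
    rwa [mem_translations, show Equiv.addLeft (f 0) = f from Equiv.ext fun x => (h x).symm]
  -- two reflections in `H` differ by a translation, so the reflections lie in one coset of `T`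
  obtain ⟨b, hb⟩ : ∃ b, ∀ y, y ∈ T ∨ y - b ∈ T := by
    by_cases hrefl : ∃ r ∈ H, ∀ x, r x = r 0 - x
    · obtain ⟨r, hrH, hr⟩ := hrefl
      refine ⟨r 0, fun y => ?_⟩
      obtain ⟨f, hfH, rfl⟩ := htrans y
      refine (haffine f hfH).imp (hrot f hfH) fun hf => ?_
      have := hrot (f * r) (H.mul_mem hfH hrH) fun x => by
        change f (r x) = f (r 0) + x
        rw [hr x, hf (r 0 - x), hf (r 0)]
        abel
      rwa [Perm.mul_apply, hf] at this
    · refine ⟨0, fun y => .inl ?_⟩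
      obtain ⟨f, hfH, rfl⟩ := htrans y
      exact hrot f hfH ((haffine f hfH).resolve_right fun hf => hrefl ⟨f, hfH, hf⟩)
  have hcover : (Set.univ : Set (Fin (n + 3))) ⊆ T ∪ (b + ·) '' T := fun y _ =>
    (hb y).imp id fun h => ⟨y - b, h, add_sub_cancel b y⟩
  calc n + 3 = (Set.univ : Set (Fin (n + 3))).ncard := by simp [Set.ncard_univ]
    _ ≤ ((T : Set (Fin (n + 3))) ∪ (b + ·) '' T).ncard := Set.ncard_le_ncard hcover
    _ ≤ (T : Set (Fin (n + 3))).ncard + ((b + ·) '' T).ncard := Set.ncard_union_le _ _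
    _ = 2 * Nat.card T := by
      rw [Set.ncard_image_of_injective _ (add_right_injective b), ← SetLike.coe_sort_coe,
        Nat.card_coe_set_eq]
      ring

theorem exists_addLeft_mem_le_two_mul_addOrderOf :
    ∃ t, Equiv.addLeft t ∈ H ∧ n + 3 ≤ 2 * addOrderOf t := by
  obtain ⟨t, ht⟩ := IsAddCyclic.exists_ofOrder_eq_natCard (α := translations H)
  refine ⟨t, t.2, ?_⟩
  rw [AddSubgroup.addOrderOf_coe, ht]
  exact le_two_mul_card_translations H hH htrans

end Translations

section CycleQuotient

variable {V : Type} {Γ : SimpleGraph V} {G N : Subgroup (Perm V)}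
  (hG : G ≤ normalizer (N : Set (Perm V))) {n : ℕ} (e : quotGraph Γ N ≃g cycleGraph (n + 3))

def cycleHom : G →* Perm (Fin (n + 3)) :=
  (e.toEquiv.permCongrHom.toMonoidHom.comp (toPermHom _ _)).comp (inclusion hG)

theorem cycleHom_apply_mk (g : G) (v : V) :
    cycleHom hG e g (e (Quotient.mk _ v)) = e (Quotient.mk _ ((g : Perm V) v)) := by
  change e (inclusion hG g • e.symm (e (Quotient.mk _ v))) = _
  rw [e.symm_apply_apply]
  rfl

theorem cycleHom_adj (hAut : ∀ g ∈ G, ∀ u v, Γ.Adj u v → Γ.Adj (g u) (g v)) (g : G)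
    {x y : Fin (n + 3)} (h : (cycleGraph (n + 3)).Adj x y) :
    (cycleGraph (n + 3)).Adj (cycleHom hG e g x) (cycleHom hG e g y) :=
  e.map_adj_iff.mpr (quotGraph_adj_smul N (hAut g g.2) (e.symm.map_adj_iff.mpr h))

theorem exists_cycleHom_apply_eq (hTrans : ∀ u v : V, ∃ g ∈ G, g u = v) (x y : Fin (n + 3)) :
    ∃ g, cycleHom hG e g x = y := by
  obtain ⟨g, hg, hgv⟩ := hTrans (e.symm x).out (e.symm y).out
  refine ⟨⟨g, hg⟩, ?_⟩
  have := cycleHom_apply_mk hG e ⟨g, hg⟩ (e.symm x).out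
  rwa [Quotient.out_eq, e.apply_symm_apply, hgv, Quotient.out_eq, e.apply_symm_apply] at this

theorem mem_orbitwiseStabilizer_of_cycleHom_eq_addLeft {g : G} {c : Fin (n + 3)}
    (hg : cycleHom hG e g = Equiv.addLeft c) {v : V} (hv : (g : Perm V) v = v) :
    (g : Perm V) ∈ orbitwiseStabilizer N := by
  have hc : c = 0 := by
    have := cycleHom_apply_mk hG e g v
    rw [hv, hg, Equiv.coe_addLeft] at this
    exact add_eq_right.mp this
  rw [hc, Equiv.addLeft_zero] at hg
  intro w
  have := cycleHom_apply_mk hG e g w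
  rw [hg, Perm.one_apply] at this
  exact Quotient.exact (e.injective this).symm

theorem semiregular_zpowers_of_cycleHom_eq_addLeft
    (hL : Semiregular (G ⊓ (centralizer (N : Set (Perm V)) ⊓ orbitwiseStabilizer N))) {g : G}
    (hgc : (g : Perm V) ∈ centralizer (N : Set (Perm V))) {c : Fin (n + 3)}
    (hg : cycleHom hG e g = Equiv.addLeft c) : Semiregular (zpowers (g : Perm V)) := by
  intro h hh v hv
  obtain ⟨z, rfl⟩ := mem_zpowers_iff.mp hh
  rw [← coe_zpow] at hv ⊢
  have hz : cycleHom hG e (g ^ z) = Equiv.addLeft (z • c) := by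
    rw [map_zpow, hg, Equiv.zsmul_addLeft]
  exact hL _ ⟨(g ^ z).2, zpow_mem hgc z,
    mem_orbitwiseStabilizer_of_cycleHom_eq_addLeft hG e hz hv⟩ v hv

theorem exists_cycleHom_eq_addLeft_le_two_mul_addOrderOf
    (hAut : ∀ g ∈ G, ∀ u v, Γ.Adj u v → Γ.Adj (g u) (g v))
    (hTrans : ∀ u v : V, ∃ g ∈ G, g u = v) :
    ∃ g t, cycleHom hG e g = Equiv.addLeft t ∧ n + 3 ≤ 2 * addOrderOf t := by
  obtain ⟨t, ⟨g, hg⟩, ht⟩ := exists_addLeft_mem_le_two_mul_addOrderOf (cycleHom hG e).range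
    (by rintro _ ⟨g, rfl⟩ x y; exact cycleHom_adj hG e hAut g)
    fun y => by
      obtain ⟨g, hg⟩ := exists_cycleHom_apply_eq hG e hTrans 0 y
      exact ⟨_, ⟨g, rfl⟩, hg⟩
  exact ⟨g, t, hg, ht⟩

end CycleQuotient

theorem stmt18_general {V : Type} [Fintype V] (Γ : SimpleGraph V)
    (G : Subgroup (Equiv.Perm V))
    (hAut : ∀ g ∈ G, ∀ u v : V, Γ.Adj (g u) (g v) ↔ Γ.Adj u v)
    (hTrans : ∀ u v : V, ∃ g ∈ G, g u = v)
    (hallsemi : ∀ N : Subgroup (Equiv.Perm V), N ≤ G →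
      (∀ g ∈ G, ∀ n ∈ N, g * n * g⁻¹ ∈ N) →
      (∀ a ∈ N, ∀ b ∈ N, a * b = b * a) → Semiregular N)
    (N : Subgroup (Equiv.Perm V)) (hNG : N ≤ G)
    (hNnormal : ∀ g ∈ G, ∀ n ∈ N, g * n * g⁻¹ ∈ N)
    (hNab : ∀ a ∈ N, ∀ b ∈ N, a * b = b * a)
    (hcycle : ∃ m : ℕ, 3 ≤ m ∧
      Nonempty (quotGraph Γ N ≃g SimpleGraph.cycleGraph m)) :
    ∃ g ∈ G,
      (∀ h ∈ Subgroup.zpowers g, ∀ v : V, h v = v → h = 1) ∧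
      Fintype.card V ≤ 2 * Nat.card ↥N * Nat.card (MulAut ↥N) * orderOf g := by
  obtain ⟨m, hm, ⟨e⟩⟩ := hcycle
  obtain ⟨n, rfl⟩ : ∃ n, m = n + 3 := ⟨m - 3, by omega⟩
  have hG : G ≤ normalizer (N : Set (Perm V)) := le_normalizer_iff.mpr hNnormal
  obtain ⟨g₀, t, hg₀, ht⟩ := exists_cycleHom_eq_addLeft_le_two_mul_addOrderOf hG e
    (fun g hg u v => (hAut g hg u v).mpr) hTrans
  set a := Nat.card (MulAut N)
  have hL : Semiregular (G ⊓ (centralizer (N : Set (Perm V)) ⊓ orbitwiseStabilizer N)) :=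
    hallsemi _ inf_le_left
      (le_normalizer_iff.mp (le_normalizer_inf_centralizer_inf_orbitwiseStabilizer N hG))
      fun f hf f' hf' => commute_of_mem_centralizer_inf_orbitwiseStabilizer N hNab hf.2 hf'.2
  refine ⟨(g₀ ^ a : G), (g₀ ^ a).2, semiregular_zpowers_of_cycleHom_eq_addLeft hG e hL
    (pow_card_mulAut_mem_centralizer N (hG g₀.2))
    (by rw [map_pow, hg₀, Equiv.nsmul_addLeft]), ?_⟩
  have hdvd : addOrderOf t ∣ a * orderOf (g₀ ^ a) := by
    rw [← orderOf_addLeft, ← hg₀]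
    exact (orderOf_map_dvd _ g₀).trans (orderOf_dvd_mul_orderOf_pow g₀ a)
  calc Fintype.card V = (n + 3) * Nat.card N := by
        rw [← Nat.card_eq_fintype_card, (hallsemi N hNG hNnormal hNab).natCard_eq,
          Nat.card_congr e.toEquiv, Nat.card_fin]
    _ ≤ 2 * addOrderOf t * Nat.card N := by gcongr
    _ ≤ 2 * (a * orderOf (g₀ ^ a)) * Nat.card N := by
        gcongr
        exact Nat.le_of_dvd (Nat.mul_pos Nat.card_pos (orderOf_pos _)) hdvd
    _ = 2 * Nat.card N * a * orderOf ((g₀ ^ a : G) : Perm V) := by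
        rw [Subgroup.orderOf_coe]; ring

theorem stmt18 {V : Type} [Fintype V] (Γ : SimpleGraph V)
    (hconn : Γ.Connected)
    (hcubic : ∀ v : V, (Γ.neighborSet v).ncard = 3)
    (G : Subgroup (Equiv.Perm V))
    (hAut : ∀ g ∈ G, ∀ u v : V, Γ.Adj (g u) (g v) ↔ Γ.Adj u v)
    (hTrans : ∀ u v : V, ∃ g ∈ G, g u = v)
    (hallsemi : ∀ N : Subgroup (Equiv.Perm V), N ≤ G →
      (∀ g ∈ G, ∀ n ∈ N, g * n * g⁻¹ ∈ N) →
      (∀ a ∈ N, ∀ b ∈ N, a * b = b * a) → Semiregular N)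
    (N : Subgroup (Equiv.Perm V)) (hNG : N ≤ G) (hNne : N ≠ ⊥)
    (hNnormal : ∀ g ∈ G, ∀ n ∈ N, g * n * g⁻¹ ∈ N)
    (hNab : ∀ a ∈ N, ∀ b ∈ N, a * b = b * a)
    (horb : 3 ≤ Nat.card (Quotient (MulAction.orbitRel (↥N) V)))
    (hcycle : ∃ m : ℕ, 3 ≤ m ∧
      Nonempty (quotGraph Γ N ≃g SimpleGraph.cycleGraph m)) :
    ∃ g ∈ G,
      (∀ h ∈ Subgroup.zpowers g, ∀ v : V, h v = v → h = 1) ∧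
      Fintype.card V ≤ 2 * Nat.card ↥N * Nat.card (MulAut ↥N) * orderOf g :=
  stmt18_general Γ G hAut hTrans hallsemi N hNG hNnormal hNab hcycle

end Stmt18
end

section
/- Let Γ be a finite connected cubic G-vertex-transitive graph and let M be a normal subgroup of G such that the normal quotient graph Γ/M is also cubic. Then: (i) M is semiregular on the vertices of Γ; (ii) M equals the kernel of the action of G on the set of M-orbits on vertices; and (iii) for any subgroup H of G containing M, if H/M is semiregular on the vertices of Γ/M then H is semiregular on the vertices of Γ. -/
/- STATEMENT 19:
Let Γ be a finite connected cubic G-vertex-transitive graph and let M be a normal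
subgroup of G such that the normal quotient Γ/M is also cubic. Then:
(i) M is semiregular on the vertices of Γ;
(ii) M equals the kernel of the action of G on the set of M-orbits on vertices;
(iii) for any subgroup H with M ≤ H ≤ G, if H/M is semiregular on the vertices of Γ/M
then H is semiregular on the vertices of Γ. -/

namespace Stmt19

/-- A set of permutations is semiregular if only the identity fixes a point. -/
def Semiregular {V : Type} (N : Subgroup (Equiv.Perm V)) : Prop :=
  ∀ n ∈ N, ∀ v : V, n v = v → n = 1

/-- The normal quotient graph `Γ/M`: vertices are the `M`-orbits, two distinct orbits
being adjacent iff some vertex of one is adjacent in `Γ` to some vertex of the other. -/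
def quotGraph {V : Type} (Γ : SimpleGraph V) (M : Subgroup (Equiv.Perm V)) :
    SimpleGraph (Quotient (MulAction.orbitRel (↥M) V)) :=
  SimpleGraph.fromRel (fun a b => ∃ u v : V,
    Quotient.mk (MulAction.orbitRel (↥M) V) u = a ∧
    Quotient.mk (MulAction.orbitRel (↥M) V) v = b ∧ Γ.Adj u v)


/-! Because `M` acts by automorphisms, the neighbours of the orbit `wᴹ` in `Γ/M` are among the
orbits of the neighbours of `w`; as both graphs are cubic, the three neighbours of every vertex
lie in three distinct `M`-orbits. So an automorphism preserving every `M`-orbit and fixing `v`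
fixes each neighbour `u` of `v` (`g u` is a neighbour of `v` in the orbit of `u`), and by
connectivity it is the identity. Applied to `m ∈ M` this is (i); applied to `m⁻¹ g`, where `m ∈ M`
agrees with the orbit-preserving `g` at one vertex, it is (ii); and an element of `H` fixing a
vertex fixes its orbit, so lies in `M`, which gives (iii) from (i). -/

theorem injOn_of_ncard_le_ncard_image_diff {α β : Type*} {f : α → β} {s : Set α} {b : β}
    (hs : s.Finite) (h : s.ncard ≤ (f '' s \ {b}).ncard) : Set.InjOn f s := by
  refine Set.injOn_of_ncard_image_eq (le_antisymm (Set.ncard_image_le hs) ?_) hs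
  exact h.trans (Set.ncard_le_ncard Set.sdiff_subset (hs.image f))

theorem eq_one_of_apply_eq_self_of_preconnected {V W : Type*} {Γ : SimpleGraph V}
    (hΓ : Γ.Preconnected) {π : V → W} (hπ : ∀ x, Set.InjOn π (Γ.neighborSet x))
    {g : Equiv.Perm V} (hg : ∀ u v, Γ.Adj u v → Γ.Adj (g u) (g v))
    (hgπ : ∀ x, π (g x) = π x) {v : V} (hv : g v = v) : g = 1 := by
  have walk_fixed : ∀ {a b : V}, Γ.Walk a b → g a = a → g b = b := by
    intro a b p
    induction p with
    | nil => exact id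
    | @cons x y z hxy _ ih =>
      intro hx
      refine ih (hπ x ?_ hxy (hgπ y))
      simpa only [hx, SimpleGraph.mem_neighborSet] using hg x y hxy
  ext w
  exact walk_fixed (hΓ v w).some hv

section QuotientGraph

variable {V : Type} {Γ : SimpleGraph V} {M : Subgroup (Equiv.Perm V)}

theorem exists_adj_mk_eq_of_mk_eq (hM : ∀ m ∈ M, ∀ u v, Γ.Adj u v → Γ.Adj (m u) (m v))
    {u v w : V} (huw : Quotient.mk (MulAction.orbitRel (↥M) V) u = Quotient.mk _ w)
    (huv : Γ.Adj u v) :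
    ∃ v', Γ.Adj w v' ∧ Quotient.mk (MulAction.orbitRel (↥M) V) v' = Quotient.mk _ v := by
  obtain ⟨m, hm⟩ := Quotient.exact huw
  refine ⟨(m⁻¹ : M) • v, ?_, Quotient.sound ⟨m⁻¹, rfl⟩⟩
  subst hm
  simpa [Subgroup.smul_def] using hM _ (m⁻¹).2 _ v huv

theorem quotGraph_neighborSet_mk_subset
    (hM : ∀ m ∈ M, ∀ u v, Γ.Adj u v → Γ.Adj (m u) (m v)) (w : V) :
    (quotGraph Γ M).neighborSet (Quotient.mk _ w) ⊆
      Quotient.mk _ '' Γ.neighborSet w \ {Quotient.mk _ w} := by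
  rintro q ⟨hne, ⟨u, v, hu, rfl, huv⟩ | ⟨v, u, rfl, hu, hvu⟩⟩
  · obtain ⟨v', hwv', hv'⟩ := exists_adj_mk_eq_of_mk_eq hM hu huv
    exact ⟨⟨v', hwv', hv'⟩, Ne.symm hne⟩
  · obtain ⟨v', hwv', hv'⟩ := exists_adj_mk_eq_of_mk_eq hM hu hvu.symm
    exact ⟨⟨v', hwv', hv'⟩, Ne.symm hne⟩

theorem injOn_mk_neighborSet (hM : ∀ m ∈ M, ∀ u v, Γ.Adj u v → Γ.Adj (m u) (m v)) {w : V}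
    (hfin : (Γ.neighborSet w).Finite)
    (hdeg : (Γ.neighborSet w).ncard ≤
      ((quotGraph Γ M).neighborSet (Quotient.mk _ w)).ncard) :
    Set.InjOn (Quotient.mk (MulAction.orbitRel (↥M) V)) (Γ.neighborSet w) :=
  injOn_of_ncard_le_ncard_image_diff hfin <| hdeg.trans <|
    Set.ncard_le_ncard (quotGraph_neighborSet_mk_subset hM w) ((hfin.image _).sdiff)

theorem eq_one_of_forall_apply_mem_orbit (hΓ : Γ.Preconnected)
    (hπ : ∀ x, Set.InjOn (Quotient.mk (MulAction.orbitRel (↥M) V)) (Γ.neighborSet x))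
    {g : Equiv.Perm V} (hg : ∀ u v, Γ.Adj u v → Γ.Adj (g u) (g v))
    (horb : ∀ w, g w ∈ MulAction.orbit (↥M) w) {v : V} (hv : g v = v) : g = 1 :=
  eq_one_of_apply_eq_self_of_preconnected hΓ hπ hg (fun x => Quotient.sound (horb x)) hv

end QuotientGraph

theorem stmt19_general {V : Type} (Γ : SimpleGraph V)
    (hconn : Γ.Connected)
    (hcubic : ∀ v : V, (Γ.neighborSet v).ncard = 3)
    (G : Subgroup (Equiv.Perm V))
    (hAut : ∀ g ∈ G, ∀ u v : V, Γ.Adj (g u) (g v) ↔ Γ.Adj u v)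
    (M : Subgroup (Equiv.Perm V)) (hMG : M ≤ G)
    (hquotcubic : ∀ q, ((quotGraph Γ M).neighborSet q).ncard = 3) :
    -- (i) M is semiregular on the vertices of Γ
    Semiregular M ∧
    -- (ii) M is the kernel of the action of G on the set of M-orbits
    ({g : Equiv.Perm V | g ∈ G ∧ ∀ w : V, g w ∈ MulAction.orbit (↥M) w}
      = (M : Set (Equiv.Perm V))) ∧
    -- (iii) if H/M is semiregular on Γ/M then H is semiregular on Γ
    (∀ H : Subgroup (Equiv.Perm V), M ≤ H → H ≤ G →
      (∀ h ∈ H, ∀ w : V, (h : Equiv.Perm V) w ∈ MulAction.orbit (↥M) w → h ∈ M) →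
      Semiregular H) := by
  have hG : ∀ g ∈ G, ∀ u v, Γ.Adj u v → Γ.Adj (g u) (g v) := fun g hg u v => (hAut g hg u v).mpr
  have hπ : ∀ w, Set.InjOn (Quotient.mk (MulAction.orbitRel (↥M) V)) (Γ.neighborSet w) :=
    fun w => injOn_mk_neighborSet (fun m hm => hG m (hMG hm))
      (Set.finite_of_ncard_ne_zero (by rw [hcubic]; norm_num)) (by rw [hcubic, hquotcubic])
  have hfixed : ∀ g ∈ G, (∀ w, g w ∈ MulAction.orbit (↥M) w) → ∀ v, g v = v → g = 1 :=
    fun g hg horb _ hv => eq_one_of_forall_apply_mem_orbit hconn.preconnected hπ (hG g hg) horb hv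
  have hsemi : Semiregular M := fun m hm v hv => hfixed m (hMG hm) (fun w => ⟨⟨m, hm⟩, rfl⟩) v hv
  refine ⟨hsemi, Set.ext fun g =>
    ⟨fun ⟨hg, horb⟩ => ?_, fun hg => ⟨hMG hg, fun w => ⟨⟨g, hg⟩, rfl⟩⟩⟩, ?_⟩
  · obtain ⟨v⟩ := hconn.nonempty
    obtain ⟨m, hm⟩ := horb v
    have hm_inv_g : (m : Equiv.Perm V)⁻¹ * g = 1 := by
      refine hfixed _ (mul_mem (inv_mem (hMG m.2)) hg) (fun w => ?_) v ?_
      · obtain ⟨m', hm'⟩ := horb w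
        exact ⟨m⁻¹ * m', by simp [← hm', Subgroup.smul_def, Equiv.Perm.mul_apply]⟩
      · simp [← hm, Subgroup.smul_def]
    simpa [inv_mul_eq_one.mp hm_inv_g] using m.2
  · intro H _ _ hHM n hn v hv
    exact hsemi n (hHM n hn v (by rw [hv]; exact MulAction.mem_orbit_self v)) v hv

theorem stmt19 {V : Type} [Fintype V] (Γ : SimpleGraph V)
    (hconn : Γ.Connected)
    (hcubic : ∀ v : V, (Γ.neighborSet v).ncard = 3)
    (G : Subgroup (Equiv.Perm V))
    (hAut : ∀ g ∈ G, ∀ u v : V, Γ.Adj (g u) (g v) ↔ Γ.Adj u v)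
    (hTrans : ∀ u v : V, ∃ g ∈ G, g u = v)
    (M : Subgroup (Equiv.Perm V)) (hMG : M ≤ G)
    (hMnormal : ∀ g ∈ G, ∀ m ∈ M, g * m * g⁻¹ ∈ M)
    (hquotcubic : ∀ q, ((quotGraph Γ M).neighborSet q).ncard = 3) :
    -- (i) M is semiregular on the vertices of Γ
    Semiregular M ∧
    -- (ii) M is the kernel of the action of G on the set of M-orbits
    ({g : Equiv.Perm V | g ∈ G ∧ ∀ w : V, g w ∈ MulAction.orbit (↥M) w}
      = (M : Set (Equiv.Perm V))) ∧
    -- (iii) if H/M is semiregular on Γ/M then H is semiregular on Γ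
    (∀ H : Subgroup (Equiv.Perm V), M ≤ H → H ≤ G →
      (∀ h ∈ H, ∀ w : V, (h : Equiv.Perm V) w ∈ MulAction.orbit (↥M) w → h ∈ M) →
      Semiregular H) :=
  stmt19_general Γ hconn hcubic G hAut M hMG hquotcubic

end Stmt19
end
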